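/- arXiv:2312.17578 — 3 statements merged into one kernel-verified Lean document; each statement's English description precedes it below -/
import Mathlib

section
/- Let (A,⦃-,-⦄,w) be a noncommutative Hamiltonian space with w = Σ_{i∈I} w_i, and let E_i := ⦃w_i,−⦄ : A → A⊗A be the gauge elements. Fix a dimension vector d. For a double derivation Θ, define derivations Θ_{p,q} of 𝕂[Rep^A_d] by Θ_{p,q}(a_{u,v}) := (Θ'(a))_{u,q}(Θ''(a))_{p,v}. Then for every i ∈ I, all indices p,q, and every a ∈ A with e_{t(a)} a e_{s(a)} = a, one has (E_i)_{p,q}(a_{u,v}) = δ_{s(a),i}δ_{p,v} a_{u,q} − δ_{t(a),i}δ_{u,q} a_{p,v}; that is, (E_i)_{p,q} acts on 𝕂[Rep^A_d] as the elementary matrix e^i_{q,p} ∈ gl_d(𝕂) under the infinitesimal conjugation action. -/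
set_option synthInstance.maxHeartbeats 1000000
set_option maxHeartbeats 2000000

open TensorProduct

noncomputable section

variable (K : Type) [Field K]

/-- The cyclic permutation `x ⊗ y ⊗ z ↦ y ⊗ z ⊗ x` on the triple tensor product. -/
def cyc132 (A : Type) [Ring A] [Algebra K A] :
    A ⊗[K] (A ⊗[K] A) →ₗ[K] A ⊗[K] (A ⊗[K] A) :=
  (TensorProduct.assoc K A A A).toLinearMap ∘ₗ
    (TensorProduct.comm K A (A ⊗[K] A)).toLinearMap

/-- `⦃b, u ⊗ v⦄_L = ⦃b, u⦄ ⊗ v`. -/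
def brExtL (A : Type) [Ring A] [Algebra K A]
    (f : A →ₗ[K] A ⊗[K] A) : A ⊗[K] A →ₗ[K] A ⊗[K] (A ⊗[K] A) :=
  (TensorProduct.assoc K A A A).toLinearMap ∘ₗ TensorProduct.map f LinearMap.id

/-- Outer bimodule structure: left multiplication `b · (u ⊗ v) = bu ⊗ v`. -/
def outL (A : Type) [Ring A] [Algebra K A] (b : A) :
    A ⊗[K] A →ₗ[K] A ⊗[K] A :=
  TensorProduct.map (LinearMap.mulLeft K b) LinearMap.id

/-- Outer bimodule structure: right multiplication `(u ⊗ v) · c = u ⊗ vc`. -/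
def outR (A : Type) [Ring A] [Algebra K A] (c : A) :
    A ⊗[K] A →ₗ[K] A ⊗[K] A :=
  TensorProduct.map LinearMap.id (LinearMap.mulRight K c)

/-- A double Poisson bracket (Van den Bergh) on an `R`-algebra `A`,
where `R = ⊕_{i ∈ I} 𝕂 e_i` is encoded by the family of idempotents `e : I → A`;
`R`-bilinearity is encoded by the vanishing `⦃e_i, -⦄ = 0`. -/
structure DoubleBracket (I : Type) (A : Type) [Ring A] [Algebra K A] (e : I → A) where
  br : A →ₗ[K] A →ₗ[K] A ⊗[K] A
  skew : ∀ a b : A, br a b = - (TensorProduct.comm K A A) (br b a)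
  leibniz : ∀ a b c : A,
    br a (b * c) = outR K A c (br a b) + outL K A b (br a c)
  jacobi : ∀ a b c : A,
    brExtL K A (br a) (br b c)
      + cyc132 K A (brExtL K A (br c) (br a b))
      + cyc132 K A (cyc132 K A (brExtL K A (br b) (br c a))) = 0
  e_vanish : ∀ (i : I) (a : A), br (e i) a = 0

/-- The span of commutators `[A,A]`. -/
def commSpan (A : Type) [Ring A] [Algebra K A] : Submodule K A :=
  Submodule.span K {x : A | ∃ a b : A, x = a * b - b * a}

/-- Zeroth Hochschild homology `HH₀(A) = A/[A,A]`. -/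
abbrev HH0 (A : Type) [Ring A] [Algebra K A] := A ⧸ commSpan K A

section RepSpaces

variable (I : Type) [Fintype I] [DecidableEq I]
variable (A : Type) [Ring A] [Algebra K A]
variable (e : I → A) (d : I → ℕ)

/-- The index set of the vector space `⊕_{i ∈ I} 𝕂^{d_i}`. -/
abbrev Nidx := Σ i : I, Fin (d i)

/-- The projection onto the `i`-th block, as a matrix. -/
def blockOne (i : I) : Matrix (Nidx I d) (Nidx I d) K :=
  Matrix.diagonal fun x => if x.1 = i then 1 else 0

/-- The representation space `Rep^A_d`: algebra maps `ρ : A → End(⊕_i 𝕂^{d_i})`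
with `ρ(e_i)` the projection onto the `i`-th summand. -/
def RepSp :=
  {ρ : A →ₐ[K] Matrix (Nidx I d) (Nidx I d) K // ∀ i : I, ρ (e i) = blockOne K I d i}

/-- The matrix coefficient function `a_{P,Q} : ρ ↦ ρ(a)_{P,Q}` on `Rep^A_d`. -/
def cf (a : A) (P Q : Nidx I d) : RepSp K I A e d → K :=
  fun ρ => ρ.1 a P Q

/-- The coordinate ring of `Rep^A_d`, generated by the matrix coefficient functions. -/
def coordRing : Subalgebra K (RepSp K I A e d → K) :=
  Algebra.adjoin K {f | ∃ (a : A) (P Q : Nidx I d), f = cf K I A e d a P Q}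

theorem cf_mem (a : A) (P Q : Nidx I d) :
    cf K I A e d a P Q ∈ coordRing K I A e d :=
  Algebra.subset_adjoin ⟨a, P, Q, rfl⟩

/-- The bilinear map `(x, y) ↦ ((ρ ↦ ρ(x)_{U,Q} · ρ(y)_{P,V}))`, used to express
`⦃a,b⦄'_{u,j} ⦃a,b⦄''_{i,v}` on a Sweedler decomposition. -/
def pairFn (P Q U V : Nidx I d) :
    A →ₗ[K] A →ₗ[K] (RepSp K I A e d → K) :=
  LinearMap.mk₂ K (fun x y => cf K I A e d x U Q * cf K I A e d y P V)
    (fun x x' y => by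
      funext ρ; simp [cf, map_add, Matrix.add_apply, add_mul])
    (fun c x y => by
      funext ρ; simp [cf, map_smul, Matrix.smul_apply, smul_eq_mul, mul_assoc])
    (fun x y y' => by
      funext ρ; simp [cf, map_add, Matrix.add_apply, mul_add])
    (fun c x y => by
      funext ρ
      simp [cf, map_smul, Matrix.smul_apply, smul_eq_mul]
      ring)

/-- The function `ρ ↦ Σ (ρ t')_{U,Q} (ρ t'')_{P,V}` for `t ∈ A ⊗ A` (Sweedler sums). -/
def brFn (t : A ⊗[K] A) (P Q U V : Nidx I d) : RepSp K I A e d → K :=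
  TensorProduct.lift (pairFn K I A e d P Q U V) t

end RepSpaces

/-! Antisymmetry turns the moment map condition into
`⦃a, w⦄ = Σ_j (e_j a ⊗ e_j - e_j ⊗ a e_j)`. Since `⦃a, e_i⦄ = 0`, the Leibniz rule makes
`⦃a, e_i w e_i⦄` the outer `e_i`-sandwich of this sum, which keeps only the term `j = i`;
antisymmetry again gives `E_i(a) = a e_i ⊗ e_i - e_i ⊗ e_i a`. At a point `ρ` of `Rep^A_d`,
`ρ(e_i)` is the projection onto the `i`-th block, and the two products of matrix entries
become the Kronecker deltas of `e^i_{q,p}`. -/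

namespace DoubleBracket

variable {K} {I A : Type} [Ring A] [Algebra K A] {e : I → A} (D : DoubleBracket K I A e)

theorem br_idem_right (i : I) (a : A) : D.br a (e i) = 0 := by
  rw [D.skew, D.e_vanish, map_zero, neg_zero]

theorem br_mul_idem_right (i : I) (a b : A) :
    D.br a (b * e i) = outR K A (e i) (D.br a b) := by
  rw [D.leibniz, D.br_idem_right, map_zero, add_zero]

theorem br_idem_mul_right (i : I) (a b : A) :
    D.br a (e i * b) = outL K A (e i) (D.br a b) := by
  rw [D.leibniz, D.br_idem_right, map_zero, zero_add]

theorem br_moment_right [Fintype I] {w : A}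
    (h_mom : ∀ p : A, D.br w p = ∑ i, ((p * e i) ⊗ₜ[K] e i - e i ⊗ₜ[K] (e i * p))) (a : A) :
    D.br a w = ∑ j, ((e j * a) ⊗ₜ[K] e j - e j ⊗ₜ[K] (a * e j)) := by
  rw [D.skew, h_mom, map_sum, ← Finset.sum_neg_distrib]
  refine Finset.sum_congr rfl fun j _ => ?_
  rw [map_sub, comm_tmul, comm_tmul, neg_sub]

theorem br_gauge [Fintype I] (h_idem : ∀ i, e i * e i = e i)
    (h_orth : ∀ i j, i ≠ j → e i * e j = 0) {w : A}
    (h_mom : ∀ p : A, D.br w p = ∑ i, ((p * e i) ⊗ₜ[K] e i - e i ⊗ₜ[K] (e i * p)))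
    (i : I) (a : A) :
    D.br (e i * w * e i) a = (a * e i) ⊗ₜ[K] e i - e i ⊗ₜ[K] (e i * a) := by
  have h_right : D.br a (e i * w * e i) = (e i * a) ⊗ₜ[K] e i - e i ⊗ₜ[K] (a * e i) := by
    rw [D.br_mul_idem_right, D.br_idem_mul_right, D.br_moment_right h_mom, map_sum, map_sum,
      Finset.sum_eq_single i]
    · simp only [outL, outR, map_sub, map_tmul, LinearMap.mulLeft_apply,
        LinearMap.mulRight_apply, LinearMap.id_apply, mul_assoc, ← mul_assoc (e i), h_idem]
    · intro j _ hji
      simp only [outL, outR, map_sub, map_tmul, LinearMap.mulLeft_apply, LinearMap.id_apply,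
        ← mul_assoc (e i), h_orth i j hji.symm, zero_mul, zero_tmul, sub_zero, map_zero]
    · exact fun h => absurd (Finset.mem_univ i) h
  rw [D.skew, h_right, map_sub, comm_tmul, comm_tmul, neg_sub]

end DoubleBracket

section CoordinateFunctions

variable {K} {I A : Type} [Fintype I] [DecidableEq I] [Ring A] [Algebra K A]
  {e : I → A} {d : I → ℕ}

theorem brFn_sub (s t : A ⊗[K] A) (P Q U V : Nidx I d) :
    brFn K I A e d (s - t) P Q U V = brFn K I A e d s P Q U V - brFn K I A e d t P Q U V :=
  map_sub _ s t

theorem brFn_tmul (x y : A) (P Q U V : Nidx I d) :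
    brFn K I A e d (x ⊗ₜ y) P Q U V = cf K I A e d x U Q * cf K I A e d y P V :=
  lift.tmul _ _

theorem cf_mul_idem_block (a : A) (i : I) (U : Nidx I d) (q : Fin (d i)) :
    cf K I A e d (a * e i) U ⟨i, q⟩ = cf K I A e d a U ⟨i, q⟩ := by
  funext ρ
  simp [cf, ρ.2 i, blockOne]

theorem cf_idem_mul_block (a : A) (i : I) (p : Fin (d i)) (V : Nidx I d) :
    cf K I A e d (e i * a) ⟨i, p⟩ V = cf K I A e d a ⟨i, p⟩ V := by
  funext ρ
  simp [cf, ρ.2 i, blockOne]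

theorem cf_idem_block_left (i : I) (p : Fin (d i)) (V : Nidx I d) :
    cf K I A e d (e i) ⟨i, p⟩ V = if V = ⟨i, p⟩ then 1 else 0 := by
  funext ρ
  by_cases hV : V = ⟨i, p⟩ <;> simp [cf, ρ.2 i, blockOne, hV, eq_comm]

theorem cf_idem_block_right (i : I) (q : Fin (d i)) (U : Nidx I d) :
    cf K I A e d (e i) U ⟨i, q⟩ = if U = ⟨i, q⟩ then 1 else 0 := by
  funext ρ
  by_cases hU : U = ⟨i, q⟩ <;> simp [cf, ρ.2 i, blockOne, hU]

end CoordinateFunctions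

theorem statement2
    (I : Type) [Fintype I] [DecidableEq I]
    (A : Type) [Ring A] [Algebra K A]
    (e : I → A) (d : I → ℕ)
    (h_idem : ∀ i, e i * e i = e i)
    (h_orth : ∀ i j, i ≠ j → e i * e j = 0)
    (D : DoubleBracket K I A e)
    -- `w = Σᵢ wᵢ` is a noncommutative moment map, with `wᵢ = eᵢ w eᵢ ∈ eᵢAeᵢ`:
    (w : A)
    (h_mom : ∀ p : A,
      D.br w p = Finset.univ.sum fun i =>
        ((p * e i) ⊗ₜ[K] (e i) - (e i) ⊗ₜ[K] (e i * p))) :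
    ∀ (i : I) (p q : Fin (d i)) (a : A) (sa ta : I)
      (_ : e ta * a * e sa = a) (U V : Nidx I d),
      -- `(E_i)_{p,q}(a_{U,V})`, where `E_i := ⦃wᵢ, −⦄` and
      -- `Θ_{p,q}(a_{u,v}) := (Θ'(a))_{u,q} (Θ''(a))_{p,v}`:
      brFn K I A e d (D.br (e i * w * e i) a) ⟨i, p⟩ ⟨i, q⟩ U V
        = (if V = (⟨i, p⟩ : Nidx I d) then cf K I A e d a U ⟨i, q⟩ else 0)
          - (if U = (⟨i, q⟩ : Nidx I d) then cf K I A e d a ⟨i, p⟩ V else 0) := by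
  intro i p q a sa ta _ U V
  rw [D.br_gauge h_idem h_orth h_mom, brFn_sub, brFn_tmul, brFn_tmul, cf_mul_idem_block,
    cf_idem_block_left, cf_idem_block_right, cf_idem_mul_block]
  simp only [mul_ite, ite_mul, mul_one, one_mul, mul_zero, zero_mul]

end
end

section
/- Let Q be a finite quiver. The path algebra 𝕂Q̄ of the doubled quiver Q̄ admits a unique double Poisson bracket ⦃-,-⦄ over R = ⊕_{i∈Q₀}𝕂e_i such that ⦃a,a*⦄ = e_{s(a)}⊗e_{t(a)} and ⦃a*,a⦄ = −e_{t(a)}⊗e_{s(a)} for every arrow a ∈ Q, and ⦃f,g⦄ = 0 for all arrows f,g ∈ Q̄ with f ≠ g*. -/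
/-! STATEMENT 5: the path algebra 𝕂Q̄ of the doubled quiver admits a unique double
Poisson bracket over R = ⊕_{i∈Q₀}𝕂e_i with ⦃a,a*⦄ = e_{s(a)}⊗e_{t(a)},
⦃a*,a⦄ = −e_{t(a)}⊗e_{s(a)} for a ∈ Q, and ⦃f,g⦄ = 0 for arrows f ≠ g*. -/

open TensorProduct

noncomputable section

variable (K : Type) [Field K]

section PathAlgebra

/- A finite quiver `Q`: vertex set `V`, arrow set `E`, source `Qs`, target `Qt`.
The doubled quiver `Q̄` has arrows `E ⊕ E`: `Sum.inl a = a` and `Sum.inr a = a*`. -/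
variable (V E : Type) [Fintype V] [DecidableEq V] [Fintype E] [DecidableEq E]
variable (Qs Qt : E → V)

/-- Source of a doubled arrow. -/
def sbar : E ⊕ E → V := Sum.elim Qs Qt

/-- Target of a doubled arrow. -/
def tbar : E ⊕ E → V := Sum.elim Qt Qs

/-- The involution `a ↦ a*`, `a* ↦ a` on doubled arrows. -/
def dstar : E ⊕ E → E ⊕ E := Sum.elim Sum.inr Sum.inl

/-- The defining relations of the path algebra of the doubled quiver `Q̄`
(products of paths compose like functions: in `x * y` the path `y` comes first). -/
inductive PathRel :
    FreeAlgebra K (V ⊕ (E ⊕ E)) → FreeAlgebra K (V ⊕ (E ⊕ E)) → Prop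
  | vert_mul (i j : V) :
      PathRel (FreeAlgebra.ι K (Sum.inl i) * FreeAlgebra.ι K (Sum.inl j))
        (if i = j then FreeAlgebra.ι K (Sum.inl i) else 0)
  | vert_sum :
      PathRel (Finset.univ.sum fun i : V => FreeAlgebra.ι K (Sum.inl i)) 1
  | arr_left (x : E ⊕ E) :
      PathRel (FreeAlgebra.ι K (Sum.inl (tbar V E Qs Qt x)) * FreeAlgebra.ι K (Sum.inr x))
        (FreeAlgebra.ι K (Sum.inr x))
  | arr_right (x : E ⊕ E) :
      PathRel (FreeAlgebra.ι K (Sum.inr x) * FreeAlgebra.ι K (Sum.inl (sbar V E Qs Qt x)))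
        (FreeAlgebra.ι K (Sum.inr x))

/-- The path algebra `𝕂Q̄` of the doubled quiver, presented by generators and relations. -/
abbrev PathAlg := RingQuot (PathRel K V E Qs Qt)

/-- The trivial path (idempotent) `e_i` at a vertex `i`. -/
def vtx (i : V) : PathAlg K V E Qs Qt :=
  RingQuot.mkAlgHom K (PathRel K V E Qs Qt) (FreeAlgebra.ι K (Sum.inl i))

/-- The element of `𝕂Q̄` given by a doubled arrow. -/
def arr (x : E ⊕ E) : PathAlg K V E Qs Qt :=
  RingQuot.mkAlgHom K (PathRel K V E Qs Qt) (FreeAlgebra.ι K (Sum.inr x))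

/-- The standard noncommutative moment map `w = Σ_{a ∈ Q} (a a* − a* a)` of `𝕂Q̄`. -/
def ncw : PathAlg K V E Qs Qt :=
  Finset.univ.sum fun a : E =>
    arr K V E Qs Qt (Sum.inl a) * arr K V E Qs Qt (Sum.inr a)
      - arr K V E Qs Qt (Sum.inr a) * arr K V E Qs Qt (Sum.inl a)

/-- The condition that a double bracket on `𝕂Q̄` is the standard one:
`⦃a,a*⦄ = e_{s(a)} ⊗ e_{t(a)}`, `⦃a*,a⦄ = −e_{t(a)} ⊗ e_{s(a)}`, and `⦃f,g⦄ = 0`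
for arrows `f ≠ g*`. -/
def IsQuiverBracket (D : DoubleBracket K V (PathAlg K V E Qs Qt) (vtx K V E Qs Qt)) :
    Prop :=
  (∀ a : E,
    D.br (arr K V E Qs Qt (Sum.inl a)) (arr K V E Qs Qt (Sum.inr a))
      = vtx K V E Qs Qt (Qs a) ⊗ₜ[K] vtx K V E Qs Qt (Qt a))
  ∧ (∀ a : E,
    D.br (arr K V E Qs Qt (Sum.inr a)) (arr K V E Qs Qt (Sum.inl a))
      = - (vtx K V E Qs Qt (Qt a) ⊗ₜ[K] vtx K V E Qs Qt (Qs a)))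
  ∧ (∀ f g : E ⊕ E, f ≠ dstar E g →
      D.br (arr K V E Qs Qt f) (arr K V E Qs Qt g) = 0)

end PathAlgebra

section DExtSection
set_option linter.unusedSectionVars false

variable {A : Type} [Ring A] [Algebra K A]

lemma outL_mul (a b : A) (m : A ⊗[K] A) :
    outL K A (a * b) m = outL K A a (outL K A b m) := by
  induction m using TensorProduct.induction_on with
  | zero => simp
  | tmul u v => simp [outL, mul_assoc]
  | add u v hu hv => simp [map_add, hu, hv]

lemma outR_mul (a b : A) (m : A ⊗[K] A) :
    outR K A (a * b) m = outR K A b (outR K A a m) := by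
  induction m using TensorProduct.induction_on with
  | zero => simp
  | tmul u v => simp [outR, mul_assoc]
  | add u v hu hv => simp [map_add, hu, hv]

lemma outL_outR (a b : A) (m : A ⊗[K] A) :
    outL K A a (outR K A b m) = outR K A b (outL K A a m) := by
  induction m using TensorProduct.induction_on with
  | zero => simp
  | tmul u v => simp [outL, outR]
  | add u v hu hv => simp [map_add, hu, hv]

lemma outL_one (m : A ⊗[K] A) : outL K A 1 m = m := by
  induction m using TensorProduct.induction_on with
  | zero => simp
  | tmul u v => simp [outL]
  | add u v hu hv => simp [map_add, hu, hv]

lemma outR_one (m : A ⊗[K] A) : outR K A 1 m = m := by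
  induction m using TensorProduct.induction_on with
  | zero => simp
  | tmul u v => simp [outR]
  | add u v hu hv => simp [map_add, hu, hv]

lemma outL_add_left (a b : A) (m : A ⊗[K] A) :
    outL K A (a + b) m = outL K A a m + outL K A b m := by
  induction m using TensorProduct.induction_on with
  | zero => simp
  | tmul u v => simp [outL, add_mul, TensorProduct.add_tmul]
  | add u v hu hv => simp only [map_add, hu, hv]; abel

lemma outR_add_left (a b : A) (m : A ⊗[K] A) :
    outR K A (a + b) m = outR K A a m + outR K A b m := by
  induction m using TensorProduct.induction_on with
  | zero => simp
  | tmul u v => simp [outR, mul_add, TensorProduct.tmul_add]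
  | add u v hu hv => simp only [map_add, hu, hv]; abel

lemma outL_smul_left (k : K) (a : A) (m : A ⊗[K] A) :
    outL K A (k • a) m = k • outL K A a m := by
  induction m using TensorProduct.induction_on with
  | zero => simp
  | tmul u v => simp [outL, smul_mul_assoc, TensorProduct.smul_tmul']
  | add u v hu hv => simp only [map_add, hu, hv, smul_add]

lemma outR_smul_left (k : K) (a : A) (m : A ⊗[K] A) :
    outR K A (k • a) m = k • outR K A a m := by
  induction m using TensorProduct.induction_on with
  | zero => simp
  | tmul u v => simp [outR, mul_smul_comm, TensorProduct.tmul_smul]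
  | add u v hu hv => simp only [map_add, hu, hv, smul_add]

lemma outL_zero_left (m : A ⊗[K] A) : outL K A 0 m = 0 := by
  induction m using TensorProduct.induction_on with
  | zero => simp
  | tmul u v => simp [outL]
  | add u v hu hv => simp only [map_add, hu, hv, add_zero]

lemma outR_zero_left (m : A ⊗[K] A) : outR K A 0 m = 0 := by
  induction m using TensorProduct.induction_on with
  | zero => simp
  | tmul u v => simp [outR]
  | add u v hu hv => simp only [map_add, hu, hv, add_zero]

/-- Square-zero extension of `A` by the outer bimodule `A ⊗[K] A`,
used to construct double derivations. -/
@[ext]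
structure DExt (A : Type) [Ring A] [Algebra K A] : Type where
  fst : A
  snd : A ⊗[K] A

namespace DExt

instance : Add (DExt K A) := ⟨fun x y => ⟨x.fst + y.fst, x.snd + y.snd⟩⟩
instance : Zero (DExt K A) := ⟨⟨0, 0⟩⟩
instance : Neg (DExt K A) := ⟨fun x => ⟨-x.fst, -x.snd⟩⟩
instance : SMul K (DExt K A) := ⟨fun k x => ⟨k • x.fst, k • x.snd⟩⟩
instance : Mul (DExt K A) :=
  ⟨fun x y => ⟨x.fst * y.fst, outL K A x.fst y.snd + outR K A y.fst x.snd⟩⟩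
instance : One (DExt K A) := ⟨⟨1, 0⟩⟩

@[simp] lemma add_fst (x y : DExt K A) : (x + y).fst = x.fst + y.fst := rfl
@[simp] lemma add_snd (x y : DExt K A) : (x + y).snd = x.snd + y.snd := rfl
@[simp] lemma zero_fst : (0 : DExt K A).fst = 0 := rfl
@[simp] lemma zero_snd : (0 : DExt K A).snd = 0 := rfl
@[simp] lemma neg_fst (x : DExt K A) : (-x).fst = -x.fst := rfl
@[simp] lemma neg_snd (x : DExt K A) : (-x).snd = -x.snd := rfl
@[simp] lemma smul_fst (k : K) (x : DExt K A) : (k • x).fst = k • x.fst := rfl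
@[simp] lemma smul_snd (k : K) (x : DExt K A) : (k • x).snd = k • x.snd := rfl
@[simp] lemma mul_fst (x y : DExt K A) : (x * y).fst = x.fst * y.fst := rfl
@[simp] lemma mul_snd (x y : DExt K A) :
    (x * y).snd = outL K A x.fst y.snd + outR K A y.fst x.snd := rfl
@[simp] lemma one_fst : (1 : DExt K A).fst = 1 := rfl
@[simp] lemma one_snd : (1 : DExt K A).snd = 0 := rfl

instance instACG : AddCommGroup (DExt K A) where
  add_assoc x y z := by ext <;> simp [add_assoc]
  zero_add x := by ext <;> simp
  add_zero x := by ext <;> simp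
  add_comm x y := by ext <;> simp [add_comm]
  neg_add_cancel x := by ext <;> simp
  nsmul := nsmulRec
  zsmul := zsmulRec

instance instRing : Ring (DExt K A) :=
  { (inferInstance : AddCommGroup (DExt K A)) with
    mul := (· * ·)
    one := 1
    mul_assoc := fun x y z => by
      ext
      · simp [mul_assoc]
      · simp only [mul_fst, mul_snd, outL_mul, outR_mul, outL_outR, map_add]
        abel
    one_mul := fun x => by ext <;> simp [outL_one, outR_zero_left]
    mul_one := fun x => by ext <;> simp [outR_one, outL_zero_left]
    left_distrib := fun x y z => by
      ext
      · simp [mul_add]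
      · simp only [mul_snd, add_snd, add_fst, outR_add_left, map_add]
        abel
    right_distrib := fun x y z => by
      ext
      · simp [add_mul]
      · simp only [mul_snd, add_snd, add_fst, outL_add_left, map_add]
        abel
    zero_mul := fun x => by ext <;> simp [outL_zero_left]
    mul_zero := fun x => by ext <;> simp [outR_zero_left] }

instance instModule : Module K (DExt K A) where
  one_smul x := by ext <;> simp
  mul_smul k l x := by ext <;> simp [mul_smul]
  smul_zero k := by ext <;> simp
  smul_add k x y := by ext <;> simp
  add_smul k l x := by ext <;> simp [add_smul]
  zero_smul x := by ext <;> simp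

instance : Algebra K (DExt K A) :=
  Algebra.ofModule
    (fun k x y => by
      ext
      · simp [smul_mul_assoc]
      · simp [outL_smul_left, smul_add]
        )
    (fun k x y => by
      ext
      · simp [mul_smul_comm]
      · simp [outR_smul_left, smul_add]
        )

/-- Projection to `A` as an algebra homomorphism. -/
def fstHom : DExt K A →ₐ[K] A where
  toFun := fst
  map_one' := rfl
  map_mul' _ _ := rfl
  map_zero' := rfl
  map_add' _ _ := rfl
  commutes' k := by
    have h : (algebraMap K (DExt K A)) k = k • 1 := Algebra.algebraMap_eq_smul_one k
    show ((algebraMap K (DExt K A)) k).fst = algebraMap K A k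
    rw [h]
    simp [Algebra.algebraMap_eq_smul_one]

/-- Projection to `A ⊗ A` as a linear map. -/
def sndL : DExt K A →ₗ[K] A ⊗[K] A where
  toFun := snd
  map_add' _ _ := rfl
  map_smul' _ _ := rfl

@[simp] lemma fstHom_apply (x : DExt K A) : fstHom K x = x.fst := rfl
@[simp] lemma sndL_apply (x : DExt K A) : sndL K x = x.snd := rfl

end DExt
end DExtSection

section QuiverAux
set_option linter.unusedSectionVars false

variable (V E : Type) [Fintype V] [DecidableEq V] [Fintype E] [DecidableEq E]
variable (Qs Qt : E → V)

lemma vtx_mul (i j : V) :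
    vtx K V E Qs Qt i * vtx K V E Qs Qt j = if i = j then vtx K V E Qs Qt i else 0 := by
  have h := RingQuot.mkAlgHom_rel K (PathRel.vert_mul (K := K) (E := E) (Qs := Qs) (Qt := Qt) i j)
  simpa [vtx, map_mul, apply_ite] using h

lemma sum_vtx : (Finset.univ.sum fun i : V => vtx K V E Qs Qt i) = 1 := by
  have h := RingQuot.mkAlgHom_rel K
    (PathRel.vert_sum (K := K) (V := V) (E := E) (Qs := Qs) (Qt := Qt))
  simpa [vtx, map_sum] using h

lemma vtx_arr (x : E ⊕ E) :
    vtx K V E Qs Qt (tbar V E Qs Qt x) * arr K V E Qs Qt x = arr K V E Qs Qt x := by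
  have h := RingQuot.mkAlgHom_rel K (PathRel.arr_left (K := K) (Qs := Qs) (Qt := Qt) x)
  simpa [vtx, arr, map_mul] using h

lemma arr_vtx (x : E ⊕ E) :
    arr K V E Qs Qt x * vtx K V E Qs Qt (sbar V E Qs Qt x) = arr K V E Qs Qt x := by
  have h := RingQuot.mkAlgHom_rel K (PathRel.arr_right (K := K) (Qs := Qs) (Qt := Qt) x)
  simpa [vtx, arr, map_mul] using h

lemma vtx_idem (i : V) : vtx K V E Qs Qt i * vtx K V E Qs Qt i = vtx K V E Qs Qt i := by
  simp [vtx_mul]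

lemma subalg_eq_top (S : Subalgebra K (PathAlg K V E Qs Qt))
    (hv : ∀ i, vtx K V E Qs Qt i ∈ S) (ha : ∀ x, arr K V E Qs Qt x ∈ S) :
    ∀ u : PathAlg K V E Qs Qt, u ∈ S := by
  intro u
  have hr : Set.range (vtx K V E Qs Qt) ∪ Set.range (arr K V E Qs Qt)
      = (RingQuot.mkAlgHom K (PathRel K V E Qs Qt)) '' (Set.range (FreeAlgebra.ι K)) := by
    rw [← Set.range_comp]
    have h2 : (RingQuot.mkAlgHom K (PathRel K V E Qs Qt)) ∘ (FreeAlgebra.ι K)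
        = Sum.elim (vtx K V E Qs Qt) (arr K V E Qs Qt) := by
      funext x; cases x <;> rfl
    rw [h2, Set.Sum.elim_range]
  have htop : Algebra.adjoin K
      (Set.range (vtx K V E Qs Qt) ∪ Set.range (arr K V E Qs Qt)) = ⊤ := by
    rw [hr, ← AlgHom.map_adjoin, FreeAlgebra.adjoin_range_ι, Algebra.map_top,
      AlgHom.range_eq_top]
    exact RingQuot.mkAlgHom_surjective K _
  have hle : Algebra.adjoin K
      (Set.range (vtx K V E Qs Qt) ∪ Set.range (arr K V E Qs Qt)) ≤ S := by
    apply Algebra.adjoin_le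
    rintro _ (⟨i, rfl⟩ | ⟨x, rfl⟩)
    · exact hv i
    · exact ha x
  rw [htop] at hle
  exact hle (by trivial)

/-- Generator values of the double derivation `∂_x`. -/
def pdGen (x : E ⊕ E) : V ⊕ (E ⊕ E) → DExt K (PathAlg K V E Qs Qt) :=
  Sum.elim (fun i => ⟨vtx K V E Qs Qt i, 0⟩)
    (fun y => ⟨arr K V E Qs Qt y,
      if y = x then vtx K V E Qs Qt (tbar V E Qs Qt x) ⊗ₜ[K] vtx K V E Qs Qt (sbar V E Qs Qt x)
      else 0⟩)

def pdFree (x : E ⊕ E) : FreeAlgebra K (V ⊕ (E ⊕ E)) →ₐ[K] DExt K (PathAlg K V E Qs Qt) :=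
  FreeAlgebra.lift K (pdGen K V E Qs Qt x)

lemma fst_sum {ι : Type} (s : Finset ι) (f : ι → DExt K (PathAlg K V E Qs Qt)) :
    (s.sum f).fst = s.sum fun i => (f i).fst :=
  map_sum (DExt.fstHom K) f s

lemma snd_sum {ι : Type} (s : Finset ι) (f : ι → DExt K (PathAlg K V E Qs Qt)) :
    (s.sum f).snd = s.sum fun i => (f i).snd :=
  map_sum (DExt.sndL K) f s

lemma pdFree_rel (x : E ⊕ E) ⦃u v : FreeAlgebra K (V ⊕ (E ⊕ E))⦄
    (h : PathRel K V E Qs Qt u v) :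
    pdFree K V E Qs Qt x u = pdFree K V E Qs Qt x v := by
  induction h with
  | vert_mul i j =>
    rw [map_mul]
    simp only [pdFree, FreeAlgebra.lift_ι_apply, apply_ite (FreeAlgebra.lift K
      (pdGen K V E Qs Qt x)), map_zero]
    ext
    · simp only [DExt.mul_fst, pdGen, Sum.elim_inl]
      rw [vtx_mul]
      split <;> rfl
    · simp only [DExt.mul_snd, pdGen, Sum.elim_inl, map_zero, add_zero]
      split <;> rfl
  | vert_sum =>
    rw [map_sum, map_one]
    ext
    · rw [fst_sum]
      simp only [pdFree, FreeAlgebra.lift_ι_apply, pdGen, Sum.elim_inl]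
      exact sum_vtx K V E Qs Qt
    · rw [snd_sum]
      simp [pdFree, FreeAlgebra.lift_ι_apply, pdGen]
  | arr_left y =>
    rw [map_mul]
    simp only [pdFree, FreeAlgebra.lift_ι_apply, pdGen, Sum.elim_inl, Sum.elim_inr]
    ext
    · simp only [DExt.mul_fst]
      exact vtx_arr K V E Qs Qt y
    · simp only [DExt.mul_snd, map_zero, add_zero]
      by_cases hyx : y = x
      · subst hyx
        simp [outL, vtx_idem]
      · simp [if_neg hyx]
  | arr_right y =>
    rw [map_mul]
    simp only [pdFree, FreeAlgebra.lift_ι_apply, pdGen, Sum.elim_inl, Sum.elim_inr]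
    ext
    · simp only [DExt.mul_fst]
      exact arr_vtx K V E Qs Qt y
    · simp only [DExt.mul_snd, map_zero, zero_add]
      by_cases hyx : y = x
      · subst hyx
        simp [outR, vtx_idem]
      · simp [if_neg hyx]

def pdHom (x : E ⊕ E) : PathAlg K V E Qs Qt →ₐ[K] DExt K (PathAlg K V E Qs Qt) :=
  RingQuot.liftAlgHom K ⟨pdFree K V E Qs Qt x, pdFree_rel K V E Qs Qt x⟩

lemma pdHom_mk (x : E ⊕ E) (u : FreeAlgebra K (V ⊕ (E ⊕ E))) :
    pdHom K V E Qs Qt x (RingQuot.mkAlgHom K (PathRel K V E Qs Qt) u)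
      = pdFree K V E Qs Qt x u := by
  rw [pdHom, RingQuot.liftAlgHom_mkAlgHom_apply]

lemma fst_pdHom (x : E ⊕ E) (u : PathAlg K V E Qs Qt) :
    (pdHom K V E Qs Qt x u).fst = u := by
  have h : (DExt.fstHom K).comp (pdHom K V E Qs Qt x)
      = AlgHom.id K (PathAlg K V E Qs Qt) := by
    apply RingQuot.ringQuot_ext'
    apply FreeAlgebra.hom_ext
    funext s
    simp only [AlgHom.comp_apply, Function.comp_apply, AlgHom.id_comp]
    rw [pdHom_mk]
    cases s <;> simp [pdFree, FreeAlgebra.lift_ι_apply, pdGen, DExt.fstHom] <;> rfl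
  calc (pdHom K V E Qs Qt x u).fst = ((DExt.fstHom K).comp (pdHom K V E Qs Qt x)) u := rfl
  _ = u := by rw [h]; rfl

/-- The double derivation `∂_x` on the path algebra. -/
def pd (x : E ⊕ E) : PathAlg K V E Qs Qt →ₗ[K]
    PathAlg K V E Qs Qt ⊗[K] PathAlg K V E Qs Qt :=
  (DExt.sndL K) ∘ₗ (pdHom K V E Qs Qt x).toLinearMap

lemma pd_vtx (x : E ⊕ E) (i : V) : pd K V E Qs Qt x (vtx K V E Qs Qt i) = 0 := by
  simp only [pd, LinearMap.comp_apply, AlgHom.toLinearMap_apply, vtx, pdHom_mk]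
  simp [pdFree, FreeAlgebra.lift_ι_apply, pdGen]

lemma pd_arr (x y : E ⊕ E) : pd K V E Qs Qt x (arr K V E Qs Qt y)
    = if y = x then vtx K V E Qs Qt (tbar V E Qs Qt x) ⊗ₜ[K] vtx K V E Qs Qt (sbar V E Qs Qt x)
      else 0 := by
  simp only [pd, LinearMap.comp_apply, AlgHom.toLinearMap_apply, arr, pdHom_mk]
  simp [pdFree, FreeAlgebra.lift_ι_apply, pdGen]

lemma pd_mul (x : E ⊕ E) (u v : PathAlg K V E Qs Qt) :
    pd K V E Qs Qt x (u * v)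
      = outL K (PathAlg K V E Qs Qt) u (pd K V E Qs Qt x v)
        + outR K (PathAlg K V E Qs Qt) v (pd K V E Qs Qt x u) := by
  simp only [pd, LinearMap.comp_apply, AlgHom.toLinearMap_apply, map_mul]
  rw [DExt.sndL_apply, DExt.mul_snd, fst_pdHom, fst_pdHom]
  rfl

end QuiverAux

section FbSection
set_option linter.unusedSectionVars false

variable {A : Type} [Ring A] [Algebra K A]

/-- The inner-structure left action on the second factor: `c ·ᵢ (u ⊗ v) = u ⊗ cv`. -/
def inL2 (c : A) : A ⊗[K] A →ₗ[K] A ⊗[K] A :=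
  TensorProduct.map LinearMap.id (LinearMap.mulLeft K c)

/-- The inner-structure right action on the first factor: `(u ⊗ v) ·ᵢ d = ud ⊗ v`. -/
def inR1 (d : A) : A ⊗[K] A →ₗ[K] A ⊗[K] A :=
  TensorProduct.map (LinearMap.mulRight K d) LinearMap.id

lemma comm_outL (c : A) (m : A ⊗[K] A) :
    (TensorProduct.comm K A A) (outL K A c m) = inL2 K c ((TensorProduct.comm K A A) m) := by
  induction m using TensorProduct.induction_on with
  | zero => simp
  | tmul u v => simp [outL, inL2]
  | add u v hu hv => simp only [map_add, hu, hv]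

lemma comm_outR (d : A) (m : A ⊗[K] A) :
    (TensorProduct.comm K A A) (outR K A d m) = inR1 K d ((TensorProduct.comm K A A) m) := by
  induction m using TensorProduct.induction_on with
  | zero => simp
  | tmul u v => simp [outR, inR1]
  | add u v hu hv => simp only [map_add, hu, hv]

/-- Auxiliary bilinear pairing `(u' ⊗ u'') , (v' ⊗ v'') ↦ (v'u'') ⊗ (u'v'')`. -/
def FbAux (u' u'' : A) : A ⊗[K] A →ₗ[K] A ⊗[K] A :=
  TensorProduct.lift (LinearMap.mk₂ K (fun v' v'' => (v' * u'') ⊗ₜ[K] (u' * v''))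
    (fun v w v'' => by simp [add_mul, TensorProduct.add_tmul])
    (fun k v v'' => by simp [smul_mul_assoc, TensorProduct.smul_tmul'])
    (fun v' v w => by simp [mul_add, TensorProduct.tmul_add])
    (fun k v' v => by simp [mul_smul_comm, TensorProduct.tmul_smul]))

@[simp] lemma FbAux_tmul (u' u'' v' v'' : A) :
    FbAux K u' u'' (v' ⊗ₜ[K] v'') = (v' * u'') ⊗ₜ[K] (u' * v'') := by
  simp [FbAux]
  rfl

/-- The bilinear pairing `Fb (u' ⊗ u'') (v' ⊗ v'') = (v'u'') ⊗ (u'v'')`. -/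
def Fb : A ⊗[K] A →ₗ[K] A ⊗[K] A →ₗ[K] A ⊗[K] A :=
  TensorProduct.lift (LinearMap.mk₂ K (FbAux K)
    (fun u w u'' => by
      apply TensorProduct.ext'
      intro v' v''
      simp [add_mul, TensorProduct.tmul_add])
    (fun k u u'' => by
      apply TensorProduct.ext'
      intro v' v''
      simp [smul_mul_assoc, TensorProduct.tmul_smul])
    (fun u' u w => by
      apply TensorProduct.ext'
      intro v' v''
      simp [mul_add, TensorProduct.add_tmul])
    (fun k u' u => by
      apply TensorProduct.ext'
      intro v' v''
      simp [mul_smul_comm, TensorProduct.smul_tmul']))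

@[simp] lemma Fb_tmul (u' u'' v' v'' : A) :
    Fb K (u' ⊗ₜ[K] u'') (v' ⊗ₜ[K] v'') = (v' * u'') ⊗ₜ[K] (u' * v'') := by
  simp [Fb]

lemma Fb_outL (p q : A ⊗[K] A) (c : A) :
    Fb K p (outL K A c q) = outL K A c (Fb K p q) := by
  induction p using TensorProduct.induction_on with
  | zero => simp
  | tmul u' u'' =>
    induction q using TensorProduct.induction_on with
    | zero => simp
    | tmul v' v'' => simp [outL, mul_assoc]
    | add q1 q2 h1 h2 => simp only [map_add, h1, h2]
  | add p1 p2 h1 h2 =>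
    simp only [map_add, LinearMap.add_apply, h1, h2]

lemma Fb_outR (p q : A ⊗[K] A) (d : A) :
    Fb K p (outR K A d q) = outR K A d (Fb K p q) := by
  induction p using TensorProduct.induction_on with
  | zero => simp
  | tmul u' u'' =>
    induction q using TensorProduct.induction_on with
    | zero => simp
    | tmul v' v'' => simp [outR, mul_assoc]
    | add q1 q2 h1 h2 => simp only [map_add, h1, h2]
  | add p1 p2 h1 h2 =>
    simp only [map_add, LinearMap.add_apply, h1, h2]

lemma comm_Fb (p q : A ⊗[K] A) :
    (TensorProduct.comm K A A) (Fb K p q) = Fb K q p := by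
  induction p using TensorProduct.induction_on with
  | zero => simp
  | tmul u' u'' =>
    induction q using TensorProduct.induction_on with
    | zero => simp
    | tmul v' v'' => simp
    | add q1 q2 h1 h2 => simp only [map_add, h1, h2, LinearMap.add_apply]
  | add p1 p2 h1 h2 =>
    simp only [map_add, LinearMap.add_apply, h1, h2]

end FbSection

section BrkSection
set_option linter.unusedSectionVars false

variable (V E : Type) [Fintype V] [DecidableEq V] [Fintype E] [DecidableEq E]
variable (Qs Qt : E → V)

instance : AddCommGroup (PathAlg K V E Qs Qt) := RingQuot.instRing _ |>.toAddCommGroup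
instance : AddCommGroup (PathAlg K V E Qs Qt ⊗[K] PathAlg K V E Qs Qt) := TensorProduct.addCommGroup

/-- One term of the quiver double bracket. -/
def brT (x y : E ⊕ E) : PathAlg K V E Qs Qt →ₗ[K] PathAlg K V E Qs Qt →ₗ[K]
    PathAlg K V E Qs Qt ⊗[K] PathAlg K V E Qs Qt :=
  ((((Fb K).comp (pd K V E Qs Qt x)).flip.comp (pd K V E Qs Qt y)).flip)

@[simp] lemma brT_apply (x y : E ⊕ E) (u v : PathAlg K V E Qs Qt) :
    brT K V E Qs Qt x y u v = Fb K (pd K V E Qs Qt x u) (pd K V E Qs Qt y v) := rfl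

/-- The quiver double bracket. -/
def brk : PathAlg K V E Qs Qt →ₗ[K] PathAlg K V E Qs Qt →ₗ[K]
    PathAlg K V E Qs Qt ⊗[K] PathAlg K V E Qs Qt :=
  Finset.univ.sum fun a : E =>
    brT K V E Qs Qt (Sum.inl a) (Sum.inr a) - brT K V E Qs Qt (Sum.inr a) (Sum.inl a)

lemma brk_apply (u v : PathAlg K V E Qs Qt) :
    brk K V E Qs Qt u v = Finset.univ.sum fun a : E =>
      Fb K (pd K V E Qs Qt (Sum.inl a) u) (pd K V E Qs Qt (Sum.inr a) v)
        - Fb K (pd K V E Qs Qt (Sum.inr a) u) (pd K V E Qs Qt (Sum.inl a) v) := by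
  simp [brk, LinearMap.sum_apply, LinearMap.sub_apply]

lemma brk_skew (u v : PathAlg K V E Qs Qt) :
    brk K V E Qs Qt u v = - (TensorProduct.comm K _ _) (brk K V E Qs Qt v u) := by
  rw [brk_apply, brk_apply, map_sum, ← Finset.sum_neg_distrib]
  apply Finset.sum_congr rfl
  intro a _
  rw [map_sub, comm_Fb, comm_Fb]
  abel

lemma brk_leibniz (u v w : PathAlg K V E Qs Qt) :
    brk K V E Qs Qt u (v * w)
      = outR K (PathAlg K V E Qs Qt) w (brk K V E Qs Qt u v)
        + outL K (PathAlg K V E Qs Qt) v (brk K V E Qs Qt u w) := by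
  rw [brk_apply, brk_apply, brk_apply, map_sum, map_sum, ← Finset.sum_add_distrib]
  apply Finset.sum_congr rfl
  intro a _
  rw [pd_mul, pd_mul]
  simp only [map_add, map_sub, Fb_outL, Fb_outR]
  abel

lemma brk_vtx_left (i : V) (v : PathAlg K V E Qs Qt) :
    brk K V E Qs Qt (vtx K V E Qs Qt i) v = 0 := by
  rw [brk_apply]
  apply Finset.sum_eq_zero
  intro a _
  simp [pd_vtx]

lemma brk_vtx_right (i : V) (v : PathAlg K V E Qs Qt) :
    brk K V E Qs Qt v (vtx K V E Qs Qt i) = 0 := by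
  rw [brk_apply]
  apply Finset.sum_eq_zero
  intro a _
  simp [pd_vtx]

lemma brk_mul_left (c d w : PathAlg K V E Qs Qt) :
    brk K V E Qs Qt (c * d) w
      = inR1 K d (brk K V E Qs Qt c w) + inL2 K c (brk K V E Qs Qt d w) := by
  have hs : ∀ p q : PathAlg K V E Qs Qt,
      brk K V E Qs Qt p q = - (TensorProduct.comm K _ _) (brk K V E Qs Qt q p) :=
    brk_skew K V E Qs Qt
  rw [hs (c * d) w, brk_leibniz]
  rw [map_add, comm_outR, comm_outL, neg_add]
  rw [← map_neg (inR1 K d), ← map_neg (inL2 K c), ← hs c w, ← hs d w]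

lemma brk_gen1 (a : E) :
    brk K V E Qs Qt (arr K V E Qs Qt (Sum.inl a)) (arr K V E Qs Qt (Sum.inr a))
      = vtx K V E Qs Qt (Qs a) ⊗ₜ[K] vtx K V E Qs Qt (Qt a) := by
  rw [brk_apply]
  rw [Finset.sum_eq_single a]
  · simp [pd_arr, tbar, sbar, vtx_idem]
  · intro b _ hba
    simp [pd_arr, Ne.symm hba]
  · intro h; exact absurd (Finset.mem_univ a) h

lemma brk_gen2 (a : E) :
    brk K V E Qs Qt (arr K V E Qs Qt (Sum.inr a)) (arr K V E Qs Qt (Sum.inl a))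
      = - (vtx K V E Qs Qt (Qt a) ⊗ₜ[K] vtx K V E Qs Qt (Qs a)) := by
  rw [brk_apply]
  rw [Finset.sum_eq_single a]
  · simp [pd_arr, tbar, sbar, vtx_idem]
  · intro b _ hba
    simp [pd_arr, Ne.symm hba]
  · intro h; exact absurd (Finset.mem_univ a) h

lemma brk_gen3 (f g : E ⊕ E) (hfg : f ≠ dstar E g) :
    brk K V E Qs Qt (arr K V E Qs Qt f) (arr K V E Qs Qt g) = 0 := by
  rw [brk_apply]
  apply Finset.sum_eq_zero
  intro a _
  have h1 : ¬(f = Sum.inl a ∧ g = Sum.inr a) := by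
    rintro ⟨rfl, rfl⟩; exact hfg rfl
  have h2 : ¬(f = Sum.inr a ∧ g = Sum.inl a) := by
    rintro ⟨rfl, rfl⟩; exact hfg rfl
  by_cases hf : f = Sum.inl a
  · subst hf
    have hg : g ≠ Sum.inr a := fun hg => h1 ⟨rfl, hg⟩
    simp [pd_arr, hg]
  · by_cases hf' : f = Sum.inr a
    · subst hf'
      have hg : g ≠ Sum.inl a := fun hg => h2 ⟨rfl, hg⟩
      simp [pd_arr, hg]
    · simp [pd_arr, hf, hf']

end BrkSection

section TripleSection
set_option linter.unusedSectionVars false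

variable {A : Type} [Ring A] [Algebra K A]

/-- Left multiplication on the first slot of the triple tensor product. -/
def lam1 (c : A) : A ⊗[K] (A ⊗[K] A) →ₗ[K] A ⊗[K] (A ⊗[K] A) :=
  TensorProduct.map (LinearMap.mulLeft K c) LinearMap.id

/-- Right multiplication on the first slot. -/
def rho1 (d : A) : A ⊗[K] (A ⊗[K] A) →ₗ[K] A ⊗[K] (A ⊗[K] A) :=
  TensorProduct.map (LinearMap.mulRight K d) LinearMap.id

/-- Left multiplication on the second slot. -/
def lam2 (c : A) : A ⊗[K] (A ⊗[K] A) →ₗ[K] A ⊗[K] (A ⊗[K] A) :=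
  TensorProduct.map LinearMap.id (TensorProduct.map (LinearMap.mulLeft K c) LinearMap.id)

/-- Right multiplication on the second slot. -/
def rho2 (d : A) : A ⊗[K] (A ⊗[K] A) →ₗ[K] A ⊗[K] (A ⊗[K] A) :=
  TensorProduct.map LinearMap.id (TensorProduct.map (LinearMap.mulRight K d) LinearMap.id)

/-- Left multiplication on the third slot. -/
def lam3 (c : A) : A ⊗[K] (A ⊗[K] A) →ₗ[K] A ⊗[K] (A ⊗[K] A) :=
  TensorProduct.map LinearMap.id (TensorProduct.map LinearMap.id (LinearMap.mulLeft K c))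

/-- Right multiplication on the third slot. -/
def rho3 (d : A) : A ⊗[K] (A ⊗[K] A) →ₗ[K] A ⊗[K] (A ⊗[K] A) :=
  TensorProduct.map LinearMap.id (TensorProduct.map LinearMap.id (LinearMap.mulRight K d))

@[simp] lemma lam1_tmul (c x y z : A) : lam1 K c (x ⊗ₜ[K] (y ⊗ₜ[K] z)) = (c*x) ⊗ₜ[K] (y ⊗ₜ[K] z) := rfl
@[simp] lemma rho1_tmul (d x y z : A) : rho1 K d (x ⊗ₜ[K] (y ⊗ₜ[K] z)) = (x*d) ⊗ₜ[K] (y ⊗ₜ[K] z) := rfl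
@[simp] lemma lam2_tmul (c x y z : A) : lam2 K c (x ⊗ₜ[K] (y ⊗ₜ[K] z)) = x ⊗ₜ[K] ((c*y) ⊗ₜ[K] z) := rfl
@[simp] lemma rho2_tmul (d x y z : A) : rho2 K d (x ⊗ₜ[K] (y ⊗ₜ[K] z)) = x ⊗ₜ[K] ((y*d) ⊗ₜ[K] z) := rfl
@[simp] lemma lam3_tmul (c x y z : A) : lam3 K c (x ⊗ₜ[K] (y ⊗ₜ[K] z)) = x ⊗ₜ[K] (y ⊗ₜ[K] (c*z)) := rfl
@[simp] lemma rho3_tmul (d x y z : A) : rho3 K d (x ⊗ₜ[K] (y ⊗ₜ[K] z)) = x ⊗ₜ[K] (y ⊗ₜ[K] (z*d)) := rfl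

@[simp] lemma cyc132_tmul (x y z : A) :
    cyc132 K A (x ⊗ₜ[K] (y ⊗ₜ[K] z)) = y ⊗ₜ[K] (z ⊗ₜ[K] x) := rfl

lemma triple_ind {P : A ⊗[K] (A ⊗[K] A) → Prop} (h0 : P 0)
    (htm : ∀ x y z : A, P (x ⊗ₜ[K] (y ⊗ₜ[K] z)))
    (hadd : ∀ s t, P s → P t → P (s + t)) : ∀ t, P t := by
  intro t
  induction t using TensorProduct.induction_on with
  | zero => exact h0
  | tmul x m =>
    induction m using TensorProduct.induction_on with
    | zero => simpa using h0
    | tmul y z => exact htm x y z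
    | add m1 m2 hm1 hm2 =>
      rw [TensorProduct.tmul_add]
      exact hadd _ _ hm1 hm2
  | add s t hs ht => exact hadd _ _ hs ht

lemma cyc132_cyc132_cyc132 (t : A ⊗[K] (A ⊗[K] A)) :
    cyc132 K A (cyc132 K A (cyc132 K A t)) = t := by
  induction t using triple_ind with
  | h0 => simp
  | htm x y z => simp
  | hadd s t hs ht => simp only [map_add, hs, ht]

lemma cyc132_rho1 (d : A) (t : A ⊗[K] (A ⊗[K] A)) :
    cyc132 K A (rho1 K d t) = rho3 K d (cyc132 K A t) := by
  induction t using triple_ind with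
  | h0 => simp
  | htm x y z => simp
  | hadd s t hs ht => simp only [map_add, hs, ht]

lemma cyc132_lam2 (c : A) (t : A ⊗[K] (A ⊗[K] A)) :
    cyc132 K A (lam2 K c t) = lam1 K c (cyc132 K A t) := by
  induction t using triple_ind with
  | h0 => simp
  | htm x y z => simp
  | hadd s t hs ht => simp only [map_add, hs, ht]

lemma cyc132_cyc132_rho2 (d : A) (t : A ⊗[K] (A ⊗[K] A)) :
    cyc132 K A (cyc132 K A (rho2 K d t)) = rho3 K d (cyc132 K A (cyc132 K A t)) := by
  induction t using triple_ind with
  | h0 => simp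
  | htm x y z => simp
  | hadd s t hs ht => simp only [map_add, hs, ht]

lemma cyc132_cyc132_lam3 (c : A) (t : A ⊗[K] (A ⊗[K] A)) :
    cyc132 K A (cyc132 K A (lam3 K c t)) = lam1 K c (cyc132 K A (cyc132 K A t)) := by
  induction t using triple_ind with
  | h0 => simp
  | htm x y z => simp
  | hadd s t hs ht => simp only [map_add, hs, ht]

lemma lam1_one (t : A ⊗[K] (A ⊗[K] A)) : lam1 K 1 t = t := by
  induction t using triple_ind with
  | h0 => simp
  | htm x y z => simp
  | hadd s t hs ht => simp only [map_add, hs, ht]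

lemma rho3_one (t : A ⊗[K] (A ⊗[K] A)) : rho3 K 1 t = t := by
  induction t using triple_ind with
  | h0 => simp
  | htm x y z => simp
  | hadd s t hs ht => simp only [map_add, hs, ht]

/-- `Xi (p ⊗ q) (u ⊗ v) = p ⊗ (qu ⊗ v)`. -/
def XiAux (p q : A) : A ⊗[K] A →ₗ[K] A ⊗[K] (A ⊗[K] A) :=
  TensorProduct.lift (LinearMap.mk₂ K (fun u v => p ⊗ₜ[K] ((q * u) ⊗ₜ[K] v))
    (fun u u' v => by simp [mul_add, TensorProduct.add_tmul, TensorProduct.tmul_add])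
    (fun k u v => by
      show p ⊗ₜ[K] ((q * (k • u)) ⊗ₜ[K] v) = k • (p ⊗ₜ[K] ((q * u) ⊗ₜ[K] v))
      rw [mul_smul_comm, ← TensorProduct.smul_tmul', TensorProduct.tmul_smul])
    (fun u v v' => by simp [TensorProduct.tmul_add])
    (fun k u v => by simp [TensorProduct.tmul_smul]))

@[simp] lemma XiAux_tmul (p q u v : A) :
    XiAux K p q (u ⊗ₜ[K] v) = p ⊗ₜ[K] ((q * u) ⊗ₜ[K] v) := by
  simp [XiAux]

def Xi : A ⊗[K] A →ₗ[K] A ⊗[K] A →ₗ[K] A ⊗[K] (A ⊗[K] A) :=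
  TensorProduct.lift (LinearMap.mk₂ K (XiAux K)
    (fun p p' q => by
      apply TensorProduct.ext'
      intro u v
      simp [TensorProduct.add_tmul])
    (fun k p q => by
      apply TensorProduct.ext'
      intro u v
      simp [TensorProduct.smul_tmul'])
    (fun p q q' => by
      apply TensorProduct.ext'
      intro u v
      simp [add_mul, TensorProduct.add_tmul, TensorProduct.tmul_add])
    (fun k p q => by
      apply TensorProduct.ext'
      intro u v
      rw [XiAux_tmul, LinearMap.smul_apply, XiAux_tmul, smul_mul_assoc,
        ← TensorProduct.smul_tmul', TensorProduct.tmul_smul]))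

@[simp] lemma Xi_tmul (p q u v : A) :
    Xi K (p ⊗ₜ[K] q) (u ⊗ₜ[K] v) = p ⊗ₜ[K] ((q * u) ⊗ₜ[K] v) := by
  simp [Xi]

/-- `Xi' (d₁ ⊗ d₂) (p ⊗ q) = (p d₁) ⊗ (d₂ ⊗ q)`. -/
def Xi'Aux (d1 d2 : A) : A ⊗[K] A →ₗ[K] A ⊗[K] (A ⊗[K] A) :=
  TensorProduct.lift (LinearMap.mk₂ K (fun p q => (p * d1) ⊗ₜ[K] (d2 ⊗ₜ[K] q))
    (fun p p' q => by simp [add_mul, TensorProduct.add_tmul])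
    (fun k p q => by simp [smul_mul_assoc, TensorProduct.smul_tmul'])
    (fun p q q' => by simp [TensorProduct.tmul_add])
    (fun k p q => by simp [TensorProduct.tmul_smul]))

@[simp] lemma Xi'Aux_tmul (d1 d2 p q : A) :
    Xi'Aux K d1 d2 (p ⊗ₜ[K] q) = (p * d1) ⊗ₜ[K] (d2 ⊗ₜ[K] q) := by
  simp [Xi'Aux]
  rfl

def Xi' : A ⊗[K] A →ₗ[K] A ⊗[K] A →ₗ[K] A ⊗[K] (A ⊗[K] A) :=
  TensorProduct.lift (LinearMap.mk₂ K (Xi'Aux K)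
    (fun d d' e => by
      apply TensorProduct.ext'
      intro p q
      simp [mul_add, TensorProduct.add_tmul])
    (fun k d e => by
      apply TensorProduct.ext'
      intro p q
      rw [Xi'Aux_tmul, LinearMap.smul_apply, Xi'Aux_tmul, mul_smul_comm,
        TensorProduct.smul_tmul'])
    (fun d e e' => by
      apply TensorProduct.ext'
      intro p q
      simp [TensorProduct.add_tmul, TensorProduct.tmul_add])
    (fun k d e => by
      apply TensorProduct.ext'
      intro p q
      rw [Xi'Aux_tmul, LinearMap.smul_apply, Xi'Aux_tmul, ← TensorProduct.smul_tmul',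
        TensorProduct.tmul_smul]))

@[simp] lemma Xi'_tmul (d1 d2 p q : A) :
    Xi' K (d1 ⊗ₜ[K] d2) (p ⊗ₜ[K] q) = (p * d1) ⊗ₜ[K] (d2 ⊗ₜ[K] q) := by
  simp [Xi']

lemma cyc132_cyc132_Xi' (m t : A ⊗[K] A) :
    cyc132 K A (cyc132 K A (Xi' K m t)) = Xi K ((TensorProduct.comm K A A) t) m := by
  induction m using TensorProduct.induction_on with
  | zero => simp
  | tmul d1 d2 =>
    induction t using TensorProduct.induction_on with
    | zero => simp
    | tmul p q => simp
    | add t1 t2 h1 h2 => simp only [map_add, LinearMap.add_apply, h1, h2]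
  | add m1 m2 h1 h2 => simp only [map_add, LinearMap.add_apply, h1, h2]

end TripleSection

section AssocSection
set_option linter.unusedSectionVars false
set_option synthInstance.maxHeartbeats 400000
set_option maxHeartbeats 1600000

variable {A : Type} [Ring A] [Algebra K A]

lemma comm_comm (m : A ⊗[K] A) :
    (TensorProduct.comm K A A) ((TensorProduct.comm K A A) m) = m := by
  induction m using TensorProduct.induction_on with
  | zero => simp
  | tmul u v => simp
  | add u v hu hv => simp only [map_add, hu, hv]

@[simp] lemma assoc_zero :
    (TensorProduct.assoc K A A A) (0 : (A ⊗[K] A) ⊗[K] A) = 0 :=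
  map_zero (TensorProduct.assoc K A A A).toLinearMap

@[simp] lemma assoc_smul (k : K) (t : (A ⊗[K] A) ⊗[K] A) :
    (TensorProduct.assoc K A A A) (k • t) = k • (TensorProduct.assoc K A A A) t :=
  map_smul (TensorProduct.assoc K A A A).toLinearMap k t

lemma brExtL_tmul (f : A →ₗ[K] A ⊗[K] A) (u v : A) :
    brExtL K A f (u ⊗ₜ[K] v) = (TensorProduct.assoc K A A A) (f u ⊗ₜ[K] v) := by
  simp [brExtL]

lemma assoc_tmul_mul (p : A ⊗[K] A) (w d : A) :
    (TensorProduct.assoc K A A A) (p ⊗ₜ[K] (w * d))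
      = rho3 K d ((TensorProduct.assoc K A A A) (p ⊗ₜ[K] w)) := by
  induction p using TensorProduct.induction_on with
  | zero => simp
  | tmul x y => simp
  | add p1 p2 h1 h2 => simp only [TensorProduct.add_tmul, map_add, h1, h2]

lemma assoc_outL_tmul (c : A) (p : A ⊗[K] A) (w : A) :
    (TensorProduct.assoc K A A A) ((outL K A c p) ⊗ₜ[K] w)
      = lam1 K c ((TensorProduct.assoc K A A A) (p ⊗ₜ[K] w)) := by
  induction p using TensorProduct.induction_on with
  | zero => simp
  | tmul x y => simp [outL]
  | add p1 p2 h1 h2 =>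
    simp only [map_add, TensorProduct.add_tmul, h1, h2]

lemma assoc_outR_tmul (u : A) (p : A ⊗[K] A) (w : A) :
    (TensorProduct.assoc K A A A) ((outR K A u p) ⊗ₜ[K] w) = Xi K p (u ⊗ₜ[K] w) := by
  induction p using TensorProduct.induction_on with
  | zero => simp
  | tmul x y => simp [outR]
  | add p1 p2 h1 h2 =>
    simp only [map_add, TensorProduct.add_tmul, h1, h2, LinearMap.add_apply]

lemma assoc_outR_tmul' (d : A) (p : A ⊗[K] A) (w : A) :
    (TensorProduct.assoc K A A A) ((outR K A d p) ⊗ₜ[K] w)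
      = rho2 K d ((TensorProduct.assoc K A A A) (p ⊗ₜ[K] w)) := by
  induction p using TensorProduct.induction_on with
  | zero => simp
  | tmul x y => simp [outR]
  | add p1 p2 h1 h2 =>
    simp only [map_add, TensorProduct.add_tmul, h1, h2]

lemma assoc_inR1_tmul (d : A) (p : A ⊗[K] A) (w : A) :
    (TensorProduct.assoc K A A A) ((inR1 K d p) ⊗ₜ[K] w)
      = rho1 K d ((TensorProduct.assoc K A A A) (p ⊗ₜ[K] w)) := by
  induction p using TensorProduct.induction_on with
  | zero => simp
  | tmul x y => simp [inR1]
  | add p1 p2 h1 h2 =>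
    simp only [map_add, TensorProduct.add_tmul, h1, h2]

lemma assoc_inL2_tmul (c : A) (p : A ⊗[K] A) (w : A) :
    (TensorProduct.assoc K A A A) ((inL2 K c p) ⊗ₜ[K] w)
      = lam2 K c ((TensorProduct.assoc K A A A) (p ⊗ₜ[K] w)) := by
  induction p using TensorProduct.induction_on with
  | zero => simp
  | tmul x y => simp [inL2]
  | add p1 p2 h1 h2 =>
    simp only [map_add, TensorProduct.add_tmul, h1, h2]

lemma assoc_outL_tmul' (p' : A) (m : A ⊗[K] A) (q' : A) :
    (TensorProduct.assoc K A A A) ((outL K A p' m) ⊗ₜ[K] q') = Xi' K m (p' ⊗ₜ[K] q') := by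
  induction m using TensorProduct.induction_on with
  | zero => simp
  | tmul x y => simp [outL]
  | add m1 m2 h1 h2 =>
    simp only [map_add, TensorProduct.add_tmul, h1, h2, LinearMap.add_apply]

lemma assoc_tmul_mul' (p : A ⊗[K] A) (c q' : A) :
    (TensorProduct.assoc K A A A) (p ⊗ₜ[K] (c * q'))
      = lam3 K c ((TensorProduct.assoc K A A A) (p ⊗ₜ[K] q')) := by
  induction p using TensorProduct.induction_on with
  | zero => simp
  | tmul x y => simp
  | add p1 p2 h1 h2 => simp only [TensorProduct.add_tmul, map_add, h1, h2]

lemma brExtL_add_f (f g : A →ₗ[K] A ⊗[K] A) (t : A ⊗[K] A) :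
    brExtL K A (f + g) t = brExtL K A f t + brExtL K A g t := by
  induction t using TensorProduct.induction_on with
  | zero => simp
  | tmul u v => simp [brExtL_tmul, TensorProduct.add_tmul]
  | add t1 t2 h1 h2 => simp only [map_add, h1, h2]; abel

lemma brExtL_smul_f (k : K) (f : A →ₗ[K] A ⊗[K] A) (t : A ⊗[K] A) :
    brExtL K A (k • f) t = k • brExtL K A f t := by
  induction t using TensorProduct.induction_on with
  | zero => simp
  | tmul u v =>
    rw [brExtL_tmul, brExtL_tmul, LinearMap.smul_apply, ← TensorProduct.smul_tmul', assoc_smul]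
  | add t1 t2 h1 h2 => simp only [map_add, h1, h2, smul_add]

end AssocSection

section JacobiSection
set_option linter.unusedSectionVars false
set_option synthInstance.maxHeartbeats 400000
set_option maxHeartbeats 1600000

variable (V E : Type) [Fintype V] [DecidableEq V] [Fintype E] [DecidableEq E]
variable (Qs Qt : E → V)

local notation "𝔸" => PathAlg K V E Qs Qt
local notation "bb" => brk K V E Qs Qt

lemma B1 (a d : 𝔸) (t : 𝔸 ⊗[K] 𝔸) :
    brExtL K 𝔸 (bb a) (outR K 𝔸 d t) = rho3 K d (brExtL K 𝔸 (bb a) t) := by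
  induction t using TensorProduct.induction_on with
  | zero => simp
  | tmul u w =>
    have : outR K 𝔸 d (u ⊗ₜ[K] w) = u ⊗ₜ[K] (w * d) := by simp [outR]
    rw [this, brExtL_tmul, brExtL_tmul, assoc_tmul_mul]
  | add t1 t2 h1 h2 => simp only [map_add, h1, h2]

lemma B2 (a c : 𝔸) (t : 𝔸 ⊗[K] 𝔸) :
    brExtL K 𝔸 (bb a) (outL K 𝔸 c t)
      = lam1 K c (brExtL K 𝔸 (bb a) t) + Xi K (bb a c) t := by
  induction t using TensorProduct.induction_on with
  | zero => simp
  | tmul u w =>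
    have h : outL K 𝔸 c (u ⊗ₜ[K] w) = (c * u) ⊗ₜ[K] w := by simp [outL]
    rw [h, brExtL_tmul, brExtL_tmul, brk_leibniz, TensorProduct.add_tmul, map_add,
      assoc_outR_tmul, assoc_outL_tmul]
    abel
  | add t1 t2 h1 h2 =>
    simp only [map_add, h1, h2]
    abel

lemma B3 (c d : 𝔸) (t : 𝔸 ⊗[K] 𝔸) :
    brExtL K 𝔸 (bb (c * d)) t
      = rho1 K d (brExtL K 𝔸 (bb c) t) + lam2 K c (brExtL K 𝔸 (bb d) t) := by
  induction t using TensorProduct.induction_on with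
  | zero => simp
  | tmul u w =>
    rw [brExtL_tmul, brExtL_tmul, brExtL_tmul, brk_mul_left, TensorProduct.add_tmul, map_add,
      assoc_inR1_tmul, assoc_inL2_tmul]
  | add t1 t2 h1 h2 =>
    simp only [map_add, h1, h2]
    abel

lemma B4 (b d : 𝔸) (t : 𝔸 ⊗[K] 𝔸) :
    brExtL K 𝔸 (bb b) (inR1 K d t)
      = rho2 K d (brExtL K 𝔸 (bb b) t) + Xi' K (bb b d) t := by
  induction t using TensorProduct.induction_on with
  | zero => simp
  | tmul p q =>
    have h : inR1 K d (p ⊗ₜ[K] q) = (p * d) ⊗ₜ[K] q := by simp [inR1]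
    rw [h, brExtL_tmul, brExtL_tmul, brk_leibniz, TensorProduct.add_tmul, map_add,
      assoc_outR_tmul', assoc_outL_tmul']
  | add t1 t2 h1 h2 =>
    simp only [map_add, h1, h2]
    abel

lemma B5 (b c : 𝔸) (t : 𝔸 ⊗[K] 𝔸) :
    brExtL K 𝔸 (bb b) (inL2 K c t) = lam3 K c (brExtL K 𝔸 (bb b) t) := by
  induction t using TensorProduct.induction_on with
  | zero => simp
  | tmul p q =>
    have h : inL2 K c (p ⊗ₜ[K] q) = p ⊗ₜ[K] (c * q) := by simp [inL2]
    rw [h, brExtL_tmul, brExtL_tmul, assoc_tmul_mul']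
  | add t1 t2 h1 h2 => simp only [map_add, h1, h2]

/-- The jacobiator of the quiver bracket. -/
def Jex (a b c : 𝔸) : 𝔸 ⊗[K] (𝔸 ⊗[K] 𝔸) :=
  brExtL K 𝔸 (bb a) (bb b c)
    + cyc132 K 𝔸 (brExtL K 𝔸 (bb c) (bb a b))
    + cyc132 K 𝔸 (cyc132 K 𝔸 (brExtL K 𝔸 (bb b) (bb c a)))

lemma Jcyc (a b c : 𝔸) : Jex K V E Qs Qt a b c = cyc132 K 𝔸 (Jex K V E Qs Qt c a b) := by
  simp only [Jex, map_add, cyc132_cyc132_cyc132]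
  abel

lemma comm_brk (c a : 𝔸) :
    (TensorProduct.comm K 𝔸 𝔸) (bb c a) = - bb a c := by
  rw [brk_skew K V E Qs Qt c a, map_neg, _root_.comm_comm]

lemma Jmul (a b c d : 𝔸) :
    Jex K V E Qs Qt a b (c * d)
      = lam1 K c (Jex K V E Qs Qt a b d) + rho3 K d (Jex K V E Qs Qt a b c) := by
  have t1 : brExtL K 𝔸 (bb a) (bb b (c * d))
      = rho3 K d (brExtL K 𝔸 (bb a) (bb b c)) + lam1 K c (brExtL K 𝔸 (bb a) (bb b d))
        + Xi K (bb a c) (bb b d) := by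
    rw [brk_leibniz, map_add, B1, B2]
    abel
  have t2 : cyc132 K 𝔸 (brExtL K 𝔸 (bb (c * d)) (bb a b))
      = rho3 K d (cyc132 K 𝔸 (brExtL K 𝔸 (bb c) (bb a b)))
        + lam1 K c (cyc132 K 𝔸 (brExtL K 𝔸 (bb d) (bb a b))) := by
    rw [B3, map_add, cyc132_rho1, cyc132_lam2]
  have t3 : cyc132 K 𝔸 (cyc132 K 𝔸 (brExtL K 𝔸 (bb b) (bb (c * d) a)))
      = rho3 K d (cyc132 K 𝔸 (cyc132 K 𝔸 (brExtL K 𝔸 (bb b) (bb c a))))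
        + lam1 K c (cyc132 K 𝔸 (cyc132 K 𝔸 (brExtL K 𝔸 (bb b) (bb d a))))
        - Xi K (bb a c) (bb b d) := by
    rw [brk_mul_left, map_add, B4, B5, map_add, map_add, map_add, map_add,
      cyc132_cyc132_rho2, cyc132_cyc132_lam3, cyc132_cyc132_Xi', comm_brk, map_neg,
      LinearMap.neg_apply]
    abel
  show brExtL K 𝔸 (bb a) (bb b (c * d))
      + cyc132 K 𝔸 (brExtL K 𝔸 (bb (c * d)) (bb a b))
      + cyc132 K 𝔸 (cyc132 K 𝔸 (brExtL K 𝔸 (bb b) (bb (c * d) a))) = _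
  rw [t1, t2, t3]
  simp only [Jex, map_add]
  abel

lemma Jadd (a b c d : 𝔸) :
    Jex K V E Qs Qt a b (c + d) = Jex K V E Qs Qt a b c + Jex K V E Qs Qt a b d := by
  simp only [Jex, map_add, LinearMap.add_apply, brExtL_add_f]
  abel

lemma Jsmul (a b c : 𝔸) (k : K) :
    Jex K V E Qs Qt a b (k • c) = k • Jex K V E Qs Qt a b c := by
  simp only [Jex, map_smul, LinearMap.smul_apply, brExtL_smul_f, smul_add]

lemma Jone (a b : 𝔸) : Jex K V E Qs Qt a b 1 = 0 := by
  have h := Jmul K V E Qs Qt a b 1 1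
  rw [mul_one, lam1_one, rho3_one] at h
  have h2 : Jex K V E Qs Qt a b 1 + 0 = Jex K V E Qs Qt a b 1 + Jex K V E Qs Qt a b 1 := by
    rw [add_zero]; exact h
  exact (add_left_cancel h2).symm

end JacobiSection

section FinalSection
set_option linter.unusedSectionVars false
set_option synthInstance.maxHeartbeats 400000
set_option maxHeartbeats 1600000

variable (V E : Type) [Fintype V] [DecidableEq V] [Fintype E] [DecidableEq E]
variable (Qs Qt : E → V)

local notation "𝔸" => PathAlg K V E Qs Qt
local notation "bb" => brk K V E Qs Qt

/-- Generators of the path algebra. -/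
def IsGen (u : 𝔸) : Prop :=
  (∃ i, u = vtx K V E Qs Qt i) ∨ ∃ x, u = arr K V E Qs Qt x

lemma brExtL_brk_vtx_tmul (x : 𝔸) (i : V) (m : 𝔸) :
    brExtL K 𝔸 (bb x) (vtx K V E Qs Qt i ⊗ₜ[K] m) = 0 := by
  rw [brExtL_tmul, brk_vtx_right]
  simp [TensorProduct.zero_tmul]

lemma Jgen_term (x u v : 𝔸) (hu : IsGen K V E Qs Qt u) (hv : IsGen K V E Qs Qt v) :
    brExtL K 𝔸 (bb x) (bb u v) = 0 := by
  rcases hu with ⟨i, rfl⟩ | ⟨f, rfl⟩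
  · rw [brk_vtx_left]
    exact map_zero _
  · rcases hv with ⟨j, rfl⟩ | ⟨g, rfl⟩
    · rw [brk_vtx_right]
      exact map_zero _
    · by_cases hfg : f = dstar E g
      · subst hfg
        cases g with
        | inl a =>
          have hd : dstar E (Sum.inl a) = Sum.inr a := rfl
          rw [hd, brk_gen2, map_neg, brExtL_brk_vtx_tmul, neg_zero]
        | inr a =>
          have hd : dstar E (Sum.inr a) = Sum.inl a := rfl
          rw [hd, brk_gen1, brExtL_brk_vtx_tmul]
      · rw [brk_gen3 K V E Qs Qt f g hfg]
        exact map_zero _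

lemma Jgen3 (a b c : 𝔸) (ha : IsGen K V E Qs Qt a) (hb : IsGen K V E Qs Qt b)
    (hc : IsGen K V E Qs Qt c) : Jex K V E Qs Qt a b c = 0 := by
  unfold Jex
  rw [Jgen_term K V E Qs Qt a b c hb hc, Jgen_term K V E Qs Qt c a b ha hb,
    Jgen_term K V E Qs Qt b c a hc ha]
  simp

lemma Jzero0 (a b : 𝔸) : Jex K V E Qs Qt a b 0 = 0 := by
  have h := Jsmul K V E Qs Qt a b 0 0
  simpa using h

/-- The subalgebra where the jacobiator (with fixed first two slots) vanishes. -/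
def SJ (a b : 𝔸) : Subalgebra K 𝔸 where
  carrier := {c | Jex K V E Qs Qt a b c = 0}
  mul_mem' := fun {c} {d} hc hd => by
    show Jex K V E Qs Qt a b (c * d) = 0
    rw [Jmul, hc, hd, map_zero, map_zero, add_zero]
  one_mem' := Jone K V E Qs Qt a b
  add_mem' := fun {c} {d} hc hd => by
    show Jex K V E Qs Qt a b (c + d) = 0
    rw [Jadd, hc, hd, add_zero]
  zero_mem' := Jzero0 K V E Qs Qt a b
  algebraMap_mem' := fun k => by
    show Jex K V E Qs Qt a b (algebraMap K 𝔸 k) = 0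
    rw [Algebra.algebraMap_eq_smul_one, Jsmul, Jone, smul_zero]

lemma vtx_isGen (i : V) : IsGen K V E Qs Qt (vtx K V E Qs Qt i) := Or.inl ⟨i, rfl⟩
lemma arr_isGen (x : E ⊕ E) : IsGen K V E Qs Qt (arr K V E Qs Qt x) := Or.inr ⟨x, rfl⟩

lemma JA1 (a b : 𝔸) (ha : IsGen K V E Qs Qt a) (hb : IsGen K V E Qs Qt b) (c : 𝔸) :
    Jex K V E Qs Qt a b c = 0 :=
  subalg_eq_top K V E Qs Qt (SJ K V E Qs Qt a b)
    (fun i => Jgen3 K V E Qs Qt a b _ ha hb (vtx_isGen K V E Qs Qt i))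
    (fun x => Jgen3 K V E Qs Qt a b _ ha hb (arr_isGen K V E Qs Qt x)) c

lemma JA2 (a c : 𝔸) (ha : IsGen K V E Qs Qt a) (hc : IsGen K V E Qs Qt c) (b : 𝔸) :
    Jex K V E Qs Qt a b c = 0 := by
  rw [Jcyc, JA1 K V E Qs Qt c a hc ha b, map_zero]

lemma JA3 (a : 𝔸) (ha : IsGen K V E Qs Qt a) (b c : 𝔸) :
    Jex K V E Qs Qt a b c = 0 :=
  subalg_eq_top K V E Qs Qt (SJ K V E Qs Qt a b)
    (fun i => JA2 K V E Qs Qt a _ ha (vtx_isGen K V E Qs Qt i) b)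
    (fun x => JA2 K V E Qs Qt a _ ha (arr_isGen K V E Qs Qt x) b) c

lemma Jzero (a b c : 𝔸) : Jex K V E Qs Qt a b c = 0 := by
  refine subalg_eq_top K V E Qs Qt (SJ K V E Qs Qt a b) ?_ ?_ c
  · intro i
    show Jex K V E Qs Qt a b (vtx K V E Qs Qt i) = 0
    rw [Jcyc, JA3 K V E Qs Qt _ (vtx_isGen K V E Qs Qt i) a b, map_zero]
  · intro x
    show Jex K V E Qs Qt a b (arr K V E Qs Qt x) = 0
    rw [Jcyc, JA3 K V E Qs Qt _ (arr_isGen K V E Qs Qt x) a b, map_zero]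

/-- The quiver double bracket as a `DoubleBracket`. -/
def quiverBracket : DoubleBracket K V 𝔸 (vtx K V E Qs Qt) where
  br := brk K V E Qs Qt
  skew := brk_skew K V E Qs Qt
  leibniz := brk_leibniz K V E Qs Qt
  jacobi := Jzero K V E Qs Qt
  e_vanish := fun i a => brk_vtx_left K V E Qs Qt i a

lemma quiverBracket_isQuiver : IsQuiverBracket K V E Qs Qt (quiverBracket K V E Qs Qt) :=
  ⟨brk_gen1 K V E Qs Qt, brk_gen2 K V E Qs Qt, brk_gen3 K V E Qs Qt⟩

lemma DoubleBracket.ext' {I A : Type} [Ring A] [Algebra K A] {e : I → A}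
    (D1 D2 : DoubleBracket K I A e) (h : D1.br = D2.br) : D1 = D2 := by
  cases D1; cases D2
  simp only at h
  subst h
  rfl

lemma br_one_left (D : DoubleBracket K V 𝔸 (vtx K V E Qs Qt)) (b : 𝔸) : D.br 1 b = 0 := by
  have h1 : (1 : 𝔸) = Finset.univ.sum fun i : V => vtx K V E Qs Qt i :=
    (sum_vtx K V E Qs Qt).symm
  rw [h1, map_sum]
  rw [LinearMap.coe_sum, Finset.sum_apply]
  apply Finset.sum_eq_zero
  intro i _
  exact D.e_vanish i b

lemma br_vtx_right (D : DoubleBracket K V 𝔸 (vtx K V E Qs Qt)) (u : 𝔸) (i : V) :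
    D.br u (vtx K V E Qs Qt i) = 0 := by
  rw [D.skew, D.e_vanish, map_zero, neg_zero]

lemma br_one_right (D : DoubleBracket K V 𝔸 (vtx K V E Qs Qt)) (u : 𝔸) : D.br u 1 = 0 := by
  rw [D.skew, br_one_left K V E Qs Qt D, map_zero, neg_zero]

lemma br_unique (D1 D2 : DoubleBracket K V 𝔸 (vtx K V E Qs Qt))
    (h1 : IsQuiverBracket K V E Qs Qt D1) (h2 : IsQuiverBracket K V E Qs Qt D2) :
    D1.br = D2.br := by
  -- Step 1: agreement when the first argument is a generator
  have step1 : ∀ g : 𝔸, IsGen K V E Qs Qt g → ∀ b, D1.br g b = D2.br g b := by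
    intro g hg
    set S : Subalgebra K 𝔸 :=
      { carrier := {b | D1.br g b = D2.br g b}
        mul_mem' := fun {c} {d} hc hd => by
          show D1.br g (c * d) = D2.br g (c * d)
          rw [D1.leibniz, D2.leibniz, hc, hd]
        one_mem' := by
          show D1.br g 1 = D2.br g 1
          rw [br_one_right K V E Qs Qt D1, br_one_right K V E Qs Qt D2]
        add_mem' := fun {c} {d} hc hd => by
          show D1.br g (c + d) = D2.br g (c + d)
          rw [map_add, map_add, hc, hd]
        zero_mem' := by
          show D1.br g 0 = D2.br g 0
          rw [map_zero, map_zero]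
        algebraMap_mem' := fun k => by
          show D1.br g (algebraMap K 𝔸 k) = D2.br g (algebraMap K 𝔸 k)
          rw [Algebra.algebraMap_eq_smul_one, map_smul, map_smul,
            br_one_right K V E Qs Qt D1, br_one_right K V E Qs Qt D2] } with hS
    refine subalg_eq_top K V E Qs Qt S ?_ ?_
    · intro i
      show D1.br g (vtx K V E Qs Qt i) = D2.br g (vtx K V E Qs Qt i)
      rw [br_vtx_right, br_vtx_right]
    · intro y
      show D1.br g (arr K V E Qs Qt y) = D2.br g (arr K V E Qs Qt y)
      rcases hg with ⟨i, rfl⟩ | ⟨f, rfl⟩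
      · rw [D1.e_vanish, D2.e_vanish]
      · by_cases hfy : f = dstar E y
        · subst hfy
          cases y with
          | inl a =>
            have hd : dstar E (Sum.inl a) = Sum.inr a := rfl
            rw [hd, h1.2.1 a, h2.2.1 a]
          | inr a =>
            have hd : dstar E (Sum.inr a) = Sum.inl a := rfl
            rw [hd, h1.1 a, h2.1 a]
        · rw [h1.2.2 f y hfy, h2.2.2 f y hfy]
  -- Step 2: agreement everywhere
  have step2 : ∀ a b : 𝔸, D1.br a b = D2.br a b := by
    have key : ∀ a : 𝔸, (∀ b, D1.br a b = D2.br a b) → ∀ b,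
        D1.br b a = D2.br b a := by
      intro a ha b
      rw [D1.skew b a, D2.skew b a, ha b]
    set T : Subalgebra K 𝔸 :=
      { carrier := {a | ∀ b, D1.br a b = D2.br a b}
        mul_mem' := fun {c} {d} hc hd => by
          intro b
          show D1.br (c * d) b = D2.br (c * d) b
          rw [D1.skew (c * d) b, D2.skew (c * d) b, D1.leibniz b c d, D2.leibniz b c d,
            key c hc b, key d hd b]
        one_mem' := by
          intro b
          rw [br_one_left K V E Qs Qt D1, br_one_left K V E Qs Qt D2]
        add_mem' := fun {c} {d} hc hd => by
          intro b
          show D1.br (c + d) b = D2.br (c + d) b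
          rw [map_add, map_add, LinearMap.add_apply, LinearMap.add_apply, hc b, hd b]
        zero_mem' := by
          intro b
          show D1.br 0 b = D2.br 0 b
          rw [map_zero, map_zero]
        algebraMap_mem' := fun k => by
          intro b
          show D1.br (algebraMap K 𝔸 k) b = D2.br (algebraMap K 𝔸 k) b
          rw [Algebra.algebraMap_eq_smul_one, map_smul, map_smul, LinearMap.smul_apply,
            LinearMap.smul_apply, br_one_left K V E Qs Qt D1, br_one_left K V E Qs Qt D2] }
      with hT
    intro a
    exact subalg_eq_top K V E Qs Qt T (fun i => step1 _ (vtx_isGen K V E Qs Qt i))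
      (fun x => step1 _ (arr_isGen K V E Qs Qt x)) a
  ext a b : 2
  exact step2 a b

end FinalSection

theorem statement5
    (V E : Type) [Fintype V] [DecidableEq V] [Fintype E] [DecidableEq E]
    (Qs Qt : E → V) :
    ∃! D : DoubleBracket K V (PathAlg K V E Qs Qt) (vtx K V E Qs Qt),
      IsQuiverBracket K V E Qs Qt D := by
  refine ⟨quiverBracket K V E Qs Qt, quiverBracket_isQuiver K V E Qs Qt, ?_⟩
  intro D hD
  exact DoubleBracket.ext' K D (quiverBracket K V E Qs Qt)
    (br_unique K V E Qs Qt D (quiverBracket K V E Qs Qt) hD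
      (quiverBracket_isQuiver K V E Qs Qt))

end
end

section
/- Let Q be a finite quiver and d ∈ ℕ^{Q₀}. Define [ŵ] ∈ ⊕_{i∈Q₀} Mat_{d_i}(D_ℏ(Rep^Q_d)) whose i-th block has (k,l) entry Σ_{a∈Q, t(a)=i} Σ_m [a]_{k,m}[a*]_{m,l} − Σ_{a∈Q, s(a)=i} Σ_m [a*]_{k,m}[a]_{m,l}. Then for all i ∈ Q₀ and all indices p,q, the identity tr([ŵ] e^i_{p,q}) = −τ_ℏ(e^i_{p,q}) − ℏ (Σ_{a∈Q, s(a)=i} d_{t(a)}) δ_{p,q} holds in D_ℏ(Rep^Q_d). Consequently, v ↦ tr([ŵ]v) is a quantum moment map for the gl_d(𝕂)-action v.D := (1/ℏ)[τ_ℏ(v), D] on D_ℏ(Rep^Q_d), and for any r = Σ_{i∈Q₀} r_i e_i ∈ R, v ↦ tr(([ŵ] + ℏ Σ_{i∈Q₀} r_i I_i) v) is also a quantum moment map, where I_i is the identity matrix of the i-th block and zero elsewhere. -/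
/-! STATEMENT 14: with [ŵ] the block matrix over D_ℏ(Rep^Q_d) whose i-th block has (k,l)
entry Σ_{t(a)=i}Σ_m [a]_{k,m}[a*]_{m,l} − Σ_{s(a)=i}Σ_m [a*]_{k,m}[a]_{m,l}, one has
tr([ŵ]e^i_{p,q}) = −τ_ℏ(e^i_{p,q}) − ℏ(Σ_{s(a)=i} d_{t(a)})δ_{p,q}; consequently
v ↦ tr([ŵ]v) is a quantum moment map for the action v.D = (1/ℏ)[τ_ℏ(v),D], and so is
v ↦ tr(([ŵ] + ℏΣ_i r_i I_i)v) for any r ∈ R. -/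

open TensorProduct

noncomputable section

variable (K : Type) [Field K]

section WeylAlgebra

variable (V E : Type) [Fintype V] [DecidableEq V] [Fintype E] [DecidableEq E]
variable (Qs Qt : E → V) (d : V → ℕ)

/-- The index set of the vector space `⊕_{i ∈ Q₀} 𝕂^{d_i}`. -/
abbrev NFin := Σ i : V, Fin (d i)

/-- Generators of the homogenized Weyl algebra: symbols `[x]_{P,Q}` for a doubled
arrow `x` and global indices `P, Q` (those outside the blocks of `x` will be set
to zero by the relations). -/
abbrev WGen := (E ⊕ E) × NFin V d × NFin V d

/-- The `ℏ`-commutator constant of two Weyl generators: `±ℏ` for a matching pair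
`[a*]_{p,q}, [a]_{q,p}`, and `0` otherwise. -/
def weylC : WGen V E d → WGen V E d → Polynomial K :=
  fun g h =>
    (if g.2.1 = h.2.2 ∧ g.2.2 = h.2.1 then 1 else 0) *
      (match g.1, h.1 with
        | Sum.inr a, Sum.inl b => if a = b then (Polynomial.X : Polynomial K) else 0
        | Sum.inl a, Sum.inr b => if a = b then -(Polynomial.X : Polynomial K) else 0
        | _, _ => 0)

/-- The defining relations of the homogenized Weyl algebra `D_ℏ(Rep^Q_d)`:
all generators commute except `[[a*]_{p,q},[a]_{u,v}] = ℏ δ_{q,u} δ_{p,v}`, and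
off-block matrix entries vanish. -/
inductive WRel :
    FreeAlgebra (Polynomial K) (WGen V E d) → FreeAlgebra (Polynomial K) (WGen V E d) → Prop
  | commRel (g h : WGen V E d) :
      WRel (FreeAlgebra.ι (Polynomial K) g * FreeAlgebra.ι (Polynomial K) h)
        (FreeAlgebra.ι (Polynomial K) h * FreeAlgebra.ι (Polynomial K) g
          + weylC K V E d g h • 1)
  | offBlock (x : E ⊕ E) (P Q : NFin V d) :
      (P.1 ≠ tbar V E Qs Qt x ∨ Q.1 ≠ sbar V E Qs Qt x) →
      WRel (FreeAlgebra.ι (Polynomial K) (x, P, Q)) 0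

/-- The homogenized Weyl algebra `D_ℏ(Rep^Q_d)` (Rees algebra of differential
operators on `Rep^Q_d`), presented by generators and relations over `𝕂[ℏ]`. -/
abbrev DW := RingQuot (WRel K V E Qs Qt d)

/-- The generator `[x]_{P,Q}` of `D_ℏ(Rep^Q_d)`; for `x = a ∈ Q` it is the matrix
coefficient function, for `x = a*` it represents `ℏ ∂/∂(a)_{Q.2,P.2}`. -/
def wgen (x : E ⊕ E) (P Q : NFin V d) : DW K V E Qs Qt d :=
  RingQuot.mkAlgHom (Polynomial K) (WRel K V E Qs Qt d) (FreeAlgebra.ι (Polynomial K) (x, P, Q))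

/-- `gl_d(𝕂) = ⊕_{i ∈ Q₀} gl_{d_i}(𝕂)`. -/
abbrev glV := (i : V) → Matrix (Fin (d i)) (Fin (d i)) K

/-- The componentwise commutator on `gl_d(𝕂)`. -/
def glComm (u v : glV K V d) : glV K V d := fun i => u i * v i - v i * u i

/-- The map `τ_ℏ : gl_d(𝕂) → D_ℏ(Rep^Q_d)`,
`e^i_{p,q} ↦ Σ_{s(a)=i} Σ_j [a]_{j,p}[a*]_{q,j} − Σ_{t(a)=i} Σ_j [a]_{q,j}[a*]_{j,p}`,
extended linearly (the quantized infinitesimal conjugation action). -/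
def tauh (M : glV K V d) : DW K V E Qs Qt d :=
  Finset.univ.sum fun i : V =>
    Finset.univ.sum fun p : Fin (d i) =>
      Finset.univ.sum fun q : Fin (d i) =>
        M i p q •
          ((Finset.univ.sum fun a : E =>
              if Qs a = i then
                Finset.univ.sum fun j : Fin (d (Qt a)) =>
                  wgen K V E Qs Qt d (Sum.inl a) ⟨Qt a, j⟩ ⟨i, p⟩
                    * wgen K V E Qs Qt d (Sum.inr a) ⟨i, q⟩ ⟨Qt a, j⟩
              else 0)
            - (Finset.univ.sum fun a : E =>
              if Qt a = i then
                Finset.univ.sum fun j : Fin (d (Qs a)) =>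
                  wgen K V E Qs Qt d (Sum.inl a) ⟨i, q⟩ ⟨Qs a, j⟩
                    * wgen K V E Qs Qt d (Sum.inr a) ⟨Qs a, j⟩ ⟨i, p⟩
              else 0))

/-- The elementary matrix `e^i_{p,q} ∈ gl_d(𝕂)`. -/
def elMat (i : V) (p q : Fin (d i)) : glV K V d :=
  fun j => if h : j = i then
      (Matrix.single (Fin.cast (congrArg d h.symm) p) (Fin.cast (congrArg d h.symm) q) 1)
    else 0

end WeylAlgebra

section Statement14

variable (V E : Type) [Fintype V] [DecidableEq V] [Fintype E] [DecidableEq E]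
variable (Qs Qt : E → V) (d : V → ℕ)

/-- The `(k,l)` entry of the `i`-th block of the quantum moment matrix `[ŵ]`. -/
def what (i : V) (k l : Fin (d i)) : DW K V E Qs Qt d :=
  (Finset.univ.sum fun a : E =>
      if Qt a = i then
        Finset.univ.sum fun m : Fin (d (Qs a)) =>
          wgen K V E Qs Qt d (Sum.inl a) ⟨i, k⟩ ⟨Qs a, m⟩
            * wgen K V E Qs Qt d (Sum.inr a) ⟨Qs a, m⟩ ⟨i, l⟩
      else 0)
    - (Finset.univ.sum fun a : E =>
      if Qs a = i then
        Finset.univ.sum fun m : Fin (d (Qt a)) =>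
          wgen K V E Qs Qt d (Sum.inr a) ⟨i, k⟩ ⟨Qt a, m⟩
            * wgen K V E Qs Qt d (Sum.inl a) ⟨Qt a, m⟩ ⟨i, l⟩
      else 0)

/-- `tr([ŵ]v) = Σ_i Σ_{k,l} [ŵ]_i(k,l) v_i(l,k)`. -/
def trw (v : glV K V d) : DW K V E Qs Qt d :=
  Finset.univ.sum fun i : V =>
    Finset.univ.sum fun k : Fin (d i) =>
      Finset.univ.sum fun l : Fin (d i) =>
        v i l k • what K V E Qs Qt d i k l

lemma tauh_elMat (i : V) (p q : Fin (d i)) :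
    tauh K V E Qs Qt d (elMat K V d i p q) =
      (Finset.univ.sum fun a : E =>
          if Qs a = i then
            Finset.univ.sum fun j : Fin (d (Qt a)) =>
              wgen K V E Qs Qt d (Sum.inl a) ⟨Qt a, j⟩ ⟨i, p⟩
                * wgen K V E Qs Qt d (Sum.inr a) ⟨i, q⟩ ⟨Qt a, j⟩
          else 0)
      - (Finset.univ.sum fun a : E =>
          if Qt a = i then
            Finset.univ.sum fun j : Fin (d (Qs a)) =>
              wgen K V E Qs Qt d (Sum.inl a) ⟨i, q⟩ ⟨Qs a, j⟩
                * wgen K V E Qs Qt d (Sum.inr a) ⟨Qs a, j⟩ ⟨i, p⟩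
          else 0) := by
  rw [tauh, Finset.sum_eq_single i]
  · simp [elMat, Matrix.single, ite_smul, ite_and, Finset.sum_ite_eq, Finset.sum_ite_eq']
  · intro b _ hb
    simp [elMat, hb]
  · simp

lemma wgen_comm (x y : E ⊕ E) (P Q R S : NFin V d) :
    wgen K V E Qs Qt d x P Q * wgen K V E Qs Qt d y R S
      = wgen K V E Qs Qt d y R S * wgen K V E Qs Qt d x P Q
        + algebraMap (Polynomial K) (DW K V E Qs Qt d)
            (weylC K V E d (x, P, Q) (y, R, S)) := by
  have h := RingQuot.mkAlgHom_rel (Polynomial K)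
    (WRel.commRel (K := K) (V := V) (E := E) (Qs := Qs) (Qt := Qt) (d := d) (x, P, Q) (y, R, S))
  simp only [map_mul, map_add, map_smul, map_one] at h
  simpa [wgen, Algebra.smul_def] using h

lemma star_mul_arr (a : E) (i : V) (q p : Fin (d i)) (m : Fin (d (Qt a))) :
    wgen K V E Qs Qt d (Sum.inr a) ⟨i, q⟩ ⟨Qt a, m⟩
        * wgen K V E Qs Qt d (Sum.inl a) ⟨Qt a, m⟩ ⟨i, p⟩
      = wgen K V E Qs Qt d (Sum.inl a) ⟨Qt a, m⟩ ⟨i, p⟩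
          * wgen K V E Qs Qt d (Sum.inr a) ⟨i, q⟩ ⟨Qt a, m⟩
        + if p = q then
            algebraMap (Polynomial K) (DW K V E Qs Qt d) Polynomial.X
          else 0 := by
  rw [wgen_comm]
  congr 1
  by_cases h : p = q
  · simp [weylC, h]
  · have h' : q ≠ p := fun hh => h hh.symm
    simp [weylC, h, h']

lemma what_eq (i : V) (p q : Fin (d i)) :
    what K V E Qs Qt d i q p
      = - tauh K V E Qs Qt d (elMat K V d i p q)
        - (if p = q then
            algebraMap (Polynomial K) (DW K V E Qs Qt d)
              (Polynomial.C (Finset.univ.sum fun a : E =>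
                  if Qs a = i then (d (Qt a) : K) else 0) * Polynomial.X)
          else 0) := by
  have hcor :
      (Finset.univ.sum fun a : E =>
        if Qs a = i then
          Finset.univ.sum fun _ : Fin (d (Qt a)) =>
            (if p = q then
              algebraMap (Polynomial K) (DW K V E Qs Qt d) Polynomial.X
            else 0)
        else 0)
      = (if p = q then
            algebraMap (Polynomial K) (DW K V E Qs Qt d)
              (Polynomial.C (Finset.univ.sum fun a : E =>
                  if Qs a = i then (d (Qt a) : K) else 0) * Polynomial.X)
          else 0) := by
    by_cases h : p = q <;>
      simp [h, Finset.sum_const, apply_ite Polynomial.C, Finset.sum_mul, ite_mul,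
        Polynomial.C_eq_natCast, nsmul_eq_mul, map_sum, apply_ite
          (algebraMap (Polynomial K) (DW K V E Qs Qt d))]
  have hB :
      (Finset.univ.sum fun a : E =>
        if Qs a = i then
          Finset.univ.sum fun m : Fin (d (Qt a)) =>
            wgen K V E Qs Qt d (Sum.inr a) ⟨i, q⟩ ⟨Qt a, m⟩
              * wgen K V E Qs Qt d (Sum.inl a) ⟨Qt a, m⟩ ⟨i, p⟩
        else 0)
      = (Finset.univ.sum fun a : E =>
          if Qs a = i then
            Finset.univ.sum fun m : Fin (d (Qt a)) =>
              wgen K V E Qs Qt d (Sum.inl a) ⟨Qt a, m⟩ ⟨i, p⟩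
                * wgen K V E Qs Qt d (Sum.inr a) ⟨i, q⟩ ⟨Qt a, m⟩
          else 0)
        + (if p = q then
            algebraMap (Polynomial K) (DW K V E Qs Qt d)
              (Polynomial.C (Finset.univ.sum fun a : E =>
                  if Qs a = i then (d (Qt a) : K) else 0) * Polynomial.X)
          else 0) := by
    rw [← hcor, ← Finset.sum_add_distrib]
    refine Finset.sum_congr rfl fun a _ => ?_
    by_cases h : Qs a = i <;> simp [h, star_mul_arr, Finset.sum_add_distrib]
  rw [what, tauh_elMat, hB]
  abel

/-- auxiliary: the coefficient of `M i p q` in `tauh M`. -/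
def sfun (i : V) (p q : Fin (d i)) : DW K V E Qs Qt d :=
  (Finset.univ.sum fun a : E =>
      if Qs a = i then
        Finset.univ.sum fun j : Fin (d (Qt a)) =>
          wgen K V E Qs Qt d (Sum.inl a) ⟨Qt a, j⟩ ⟨i, p⟩
            * wgen K V E Qs Qt d (Sum.inr a) ⟨i, q⟩ ⟨Qt a, j⟩
      else 0)
    - (Finset.univ.sum fun a : E =>
      if Qt a = i then
        Finset.univ.sum fun j : Fin (d (Qs a)) =>
          wgen K V E Qs Qt d (Sum.inl a) ⟨i, q⟩ ⟨Qs a, j⟩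
            * wgen K V E Qs Qt d (Sum.inr a) ⟨Qs a, j⟩ ⟨i, p⟩
      else 0)

lemma tauh_expand (M : glV K V d) :
    tauh K V E Qs Qt d M =
      Finset.univ.sum fun i : V =>
        Finset.univ.sum fun p : Fin (d i) =>
          Finset.univ.sum fun q : Fin (d i) =>
            M i p q • sfun K V E Qs Qt d i p q := rfl

lemma ksmul_algebraMap (c : K) (p : Polynomial K) :
    c • (algebraMap (Polynomial K) (DW K V E Qs Qt d) p)
      = algebraMap (Polynomial K) (DW K V E Qs Qt d) (Polynomial.C c * p) := by
  rw [Algebra.smul_def, IsScalarTower.algebraMap_apply K (Polynomial K) (DW K V E Qs Qt d),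
    ← map_mul, ← Polynomial.algebraMap_eq]

lemma dw_sub (x y : DW K V E Qs Qt d) : x - y = x + -y := sub_eq_add_neg x y

lemma dw_sum_neg {α : Type} (s : Finset α) (f : α → DW K V E Qs Qt d) :
    (s.sum fun a => -f a) = -(s.sum f) :=
  Finset.sum_neg_distrib (s := s) (f := f)

lemma dw_smul_add (c : K) (x y : DW K V E Qs Qt d) : c • (x + y) = c • x + c • y :=
  smul_add c x y

lemma dw_smul_neg (c : K) (x : DW K V E Qs Qt d) : c • (-x) = -(c • x) :=
  smul_neg c x

lemma trw_tauh (v : glV K V d) : ∃ c : Polynomial K,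
    trw K V E Qs Qt d v
      = - tauh K V E Qs Qt d v + algebraMap (Polynomial K) (DW K V E Qs Qt d) c := by
  classical
  refine ⟨- Finset.univ.sum (fun i : V => Finset.univ.sum fun k : Fin (d i) =>
      Polynomial.C (v i k k) *
        (Polynomial.C (Finset.univ.sum fun a : E =>
            if Qs a = i then (d (Qt a) : K) else 0) * Polynomial.X)), ?_⟩
  have step : ∀ (i : V) (k l : Fin (d i)),
      v i l k • what K V E Qs Qt d i k l
        = -(v i l k • sfun K V E Qs Qt d i l k)
          + -(if l = k then
              algebraMap (Polynomial K) (DW K V E Qs Qt d)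
                (Polynomial.C (v i l k) *
                  (Polynomial.C (Finset.univ.sum fun a : E =>
                      if Qs a = i then (d (Qt a) : K) else 0) * Polynomial.X))
            else 0) := by
    intro i k l
    have hT : v i l k • (if l = k then
          algebraMap (Polynomial K) (DW K V E Qs Qt d)
            (Polynomial.C (Finset.univ.sum fun a : E =>
                if Qs a = i then (d (Qt a) : K) else 0) * Polynomial.X) else 0)
        = (if l = k then
            algebraMap (Polynomial K) (DW K V E Qs Qt d)
              (Polynomial.C (v i l k) *
                (Polynomial.C (Finset.univ.sum fun a : E =>
                    if Qs a = i then (d (Qt a) : K) else 0) * Polynomial.X))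
          else 0) := by
      by_cases h : l = k
      · simp only [h, if_true]
        exact ksmul_algebraMap K V E Qs Qt d _ _
      · simp only [h, if_false, smul_zero]
    rw [what_eq K V E Qs Qt d i l k, tauh_elMat, ← hT]
    simp only [sfun, dw_sub, dw_smul_add, dw_smul_neg]
  rw [trw]
  simp only [step]
  rw [tauh_expand]
  simp only [Finset.sum_add_distrib, dw_sum_neg, Finset.sum_ite_eq', Finset.mem_univ,
    if_true, map_neg, map_sum]
  congr 1
  exact congrArg Neg.neg (Finset.sum_congr rfl fun i _ => Finset.sum_comm)

lemma comm_helper {A : Type} [Ring A] (T Z a : A) (h : Z * a = a * Z) :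
    -((-T + Z) * a - a * (-T + Z)) = T * a - a * T := by
  rw [add_mul, mul_add, neg_mul, mul_neg, h]; abel

lemma dw_add_assoc (x y z : DW K V E Qs Qt d) : x + y + z = x + (y + z) := add_assoc x y z

lemma dw_map_add (p q : Polynomial K) :
    algebraMap (Polynomial K) (DW K V E Qs Qt d) p
        + algebraMap (Polynomial K) (DW K V E Qs Qt d) q
      = algebraMap (Polynomial K) (DW K V E Qs Qt d) (p + q) := (map_add _ _ _).symm

theorem statement14 (r : V → K) :
    -- the trace identity `tr([ŵ]e^i_{p,q}) = −τ_ℏ(e^i_{p,q}) − ℏ(Σ_{s(a)=i} d_{t(a)})δ_{p,q}`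
    -- (note `tr([ŵ]e^i_{p,q})` is the `(q,p)` entry of the `i`-th block of `[ŵ]`):
    (∀ (i : V) (p q : Fin (d i)),
      what K V E Qs Qt d i q p
        = - tauh K V E Qs Qt d (elMat K V d i p q)
          - (if p = q then
              algebraMap (Polynomial K) (DW K V E Qs Qt d)
                (Polynomial.C (Finset.univ.sum fun a : E =>
                    if Qs a = i then (d (Qt a) : K) else 0) * Polynomial.X)
            else 0))
    -- `v ↦ tr([ŵ]v)` is a quantum moment map for the action `v.D = (1/ℏ)[τ_ℏ(v),D]`:
    ∧ (∀ (v : glV K V d) (a : DW K V E Qs Qt d),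
      -(trw K V E Qs Qt d v * a - a * trw K V E Qs Qt d v)
        = tauh K V E Qs Qt d v * a - a * tauh K V E Qs Qt d v)
    -- and so is `v ↦ tr(([ŵ] + ℏ Σ_i r_i I_i) v)`:
    ∧ (∀ (v : glV K V d) (a : DW K V E Qs Qt d),
      -((trw K V E Qs Qt d v
          + algebraMap (Polynomial K) (DW K V E Qs Qt d)
              (Polynomial.C (Finset.univ.sum fun i : V => r i * Matrix.trace (v i))
                * Polynomial.X)) * a
        - a * (trw K V E Qs Qt d v
          + algebraMap (Polynomial K) (DW K V E Qs Qt d)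
              (Polynomial.C (Finset.univ.sum fun i : V => r i * Matrix.trace (v i))
                * Polynomial.X)))
        = tauh K V E Qs Qt d v * a - a * tauh K V E Qs Qt d v) := by
  refine ⟨what_eq K V E Qs Qt d, ?_, ?_⟩
  · intro v a
    obtain ⟨c, hc⟩ := trw_tauh K V E Qs Qt d v
    rw [hc]
    exact comm_helper (tauh K V E Qs Qt d v)
      (algebraMap (Polynomial K) (DW K V E Qs Qt d) c) a (Algebra.commutes c a)
  · intro v a
    obtain ⟨c, hc⟩ := trw_tauh K V E Qs Qt d v
    rw [hc, dw_add_assoc, dw_map_add]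
    exact comm_helper (tauh K V E Qs Qt d v)
      (algebraMap (Polynomial K) (DW K V E Qs Qt d)
        (c + Polynomial.C (Finset.univ.sum fun i : V => r i * Matrix.trace (v i))
          * Polynomial.X)) a (Algebra.commutes _ a)

end Statement14

end
end
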